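/- arXiv:1101.5926 — 6 statements merged into one kernel-verified Lean document; each statement's English description precedes it below -/
import Mathlib

section
/- (Expander Mixing Lemma for Weighted Graphs) Let G=(V,W) be an edge-weighted graph with positive generalized degrees and Vol(V)=1, and let B_D be its normalized modularity matrix. Then for all subsets X, Y ⊆ V: |w(X,Y) − Vol(X)Vol(Y)| ≤ ‖B_D‖·√(Vol(X)(1−Vol(X))·Vol(Y)(1−Vol(Y))) ≤ ‖B_D‖·√(Vol(X)Vol(Y)), where ‖B_D‖ is the spectral norm of B_D. -/
/-!
With `s = D^{1/2} 1` and `x = D^{1/2} 1_X`, `y = D^{1/2} 1_Y` one has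
`xᵀ B_D y = w(X,Y) - Vol(X) Vol(Y)`. Taking `X = V` or `Y = V` shows that `s` is a left and a
right null vector of `B_D` (row and column sums of `W` are the degrees, and `Vol(V) = 1`), so
centring `x ↦ x - Vol(X) s`, `y ↦ y - Vol(Y) s` leaves the bilinear form unchanged while shrinking
the squared norm of `x` from `Vol(X)` to `Vol(X)(1 - Vol(X))`, and likewise for `y`.
Cauchy–Schwarz and the operator norm bound finish the proof.
-/

open Finset Matrix

noncomputable section

/-- weighted cut between two vertex subsets: `w(X,Y) = ∑_{i∈X} ∑_{j∈Y} w_{ij}` -/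
def wcut {n : ℕ} (W : Matrix (Fin n) (Fin n) ℝ) (X Y : Finset (Fin n)) : ℝ :=
  ∑ i ∈ X, ∑ j ∈ Y, W i j

/-- generalized degree `d_i = ∑_j w_{ij}` -/
def gdeg {n : ℕ} (W : Matrix (Fin n) (Fin n) ℝ) (i : Fin n) : ℝ := ∑ j, W i j

/-- volume of a vertex subset: `Vol(U) = ∑_{i∈U} d_i` -/
def gvol {n : ℕ} (W : Matrix (Fin n) (Fin n) ℝ) (U : Finset (Fin n)) : ℝ :=
  ∑ i ∈ U, gdeg W i

/-- the normalized adjacency matrix `D^{-1/2} W D^{-1/2}` -/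
def normAdj {n : ℕ} (W : Matrix (Fin n) (Fin n) ℝ) : Matrix (Fin n) (Fin n) ℝ :=
  Matrix.of fun i j => W i j / (Real.sqrt (gdeg W i) * Real.sqrt (gdeg W j))

/-- the normalized Laplacian `L_D = I - D^{-1/2} W D^{-1/2}` -/
def normLap {n : ℕ} (W : Matrix (Fin n) (Fin n) ℝ) : Matrix (Fin n) (Fin n) ℝ :=
  1 - normAdj W

/-- the normalized modularity matrix `B_D = D^{-1/2} W D^{-1/2} - √d √dᵀ` -/
def modMat {n : ℕ} (W : Matrix (Fin n) (Fin n) ℝ) : Matrix (Fin n) (Fin n) ℝ :=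
  normAdj W - Matrix.of fun i j => Real.sqrt (gdeg W i) * Real.sqrt (gdeg W j)

/-- Euclidean inner product on `ℝ^n` -/
def dotR {n : ℕ} (u v : Fin n → ℝ) : ℝ := ∑ i, u i * v i

/-- a family of pairwise orthogonal unit-norm vectors of `ℝ^n` -/
def IsOrthonormalSys {m n : ℕ} (u : Fin m → Fin n → ℝ) : Prop :=
  ∀ i j, dotR (u i) (u j) = if i = j then 1 else 0

/-- spectral norm (largest singular value) of a real matrix -/
def specNorm {n : ℕ} (M : Matrix (Fin n) (Fin n) ℝ) : ℝ :=
  ‖Matrix.toEuclideanCLM (𝕜 := ℝ) M‖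

/-- connectivity of the weighted graph (irreducibility of `W`) -/
def gConnected {n : ℕ} (W : Matrix (Fin n) (Fin n) ℝ) : Prop :=
  (SimpleGraph.fromRel fun i j => W i j ≠ 0).Connected

/-- the `a`-th cluster of the partition encoded by `P : Fin n → Fin k` -/
def partSet {n k : ℕ} (P : Fin n → Fin k) (a : Fin k) : Finset (Fin n) :=
  univ.filter fun j => P j = a

/-- `(A,B)` is an `α`-volume regular pair:
for all `X ⊆ A`, `Y ⊆ B`, `|w(X,Y) - ρ(A,B) Vol(X) Vol(Y)| ≤ α √(Vol(A) Vol(B))`,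
where `ρ(A,B) = w(A,B)/(Vol(A) Vol(B))`. -/
def volReg {n : ℕ} (W : Matrix (Fin n) (Fin n) ℝ) (α : ℝ) (A B : Finset (Fin n)) : Prop :=
  ∀ X ⊆ A, ∀ Y ⊆ B,
    |wcut W X Y - wcut W A B / (gvol W A * gvol W B) * (gvol W X * gvol W Y)|
      ≤ α * Real.sqrt (gvol W A * gvol W B)

/-- isoperimetric number `h(G) = min_{U : Vol(U) ≤ 1/2} w(U, U̅)/Vol(U)` -/
def isoNum {n : ℕ} (W : Matrix (Fin n) (Fin n) ℝ) : ℝ :=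
  sInf {r | ∃ U : Finset (Fin n), U.Nonempty ∧ gvol W U ≤ 1/2 ∧ r = wcut W U Uᶜ / gvol W U}

/-- weighted cluster center of scalar vertex representatives -/
def sCenter {n k : ℕ} (d : Fin n → ℝ) (x : Fin n → ℝ) (P : Fin n → Fin k) (a : Fin k) : ℝ :=
  (∑ j ∈ partSet P a, d j)⁻¹ * ∑ j ∈ partSet P a, d j * x j

/-- weighted k-variance of scalar vertex representatives w.r.t. the partition `P` -/
def sVar {n k : ℕ} (d : Fin n → ℝ) (x : Fin n → ℝ) (P : Fin n → Fin k) : ℝ :=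
  ∑ a, ∑ j ∈ partSet P a, d j * (x j - sCenter d x P a) ^ 2

/-- minimum weighted 2-variance `S_2²` of scalar vertex representatives -/
def S2var {n : ℕ} (d : Fin n → ℝ) (x : Fin n → ℝ) : ℝ :=
  sInf {r | ∃ P : Fin n → Fin 2, Function.Surjective P ∧ r = sVar d x P}

/-- weighted cluster center of vector vertex representatives -/
def vCenter {n k m : ℕ} (d : Fin n → ℝ) (x : Fin n → Fin m → ℝ) (P : Fin n → Fin k) (a : Fin k) :
    Fin m → ℝ :=
  fun t => (∑ j ∈ partSet P a, d j)⁻¹ * ∑ j ∈ partSet P a, d j * x j t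

/-- weighted k-variance `S_k²(P, X)` of vector vertex representatives w.r.t. the partition `P` -/
def kVar {n k m : ℕ} (d : Fin n → ℝ) (x : Fin n → Fin m → ℝ) (P : Fin n → Fin k) : ℝ :=
  ∑ a, ∑ j ∈ partSet P a, d j * ∑ t, (x j t - vCenter d x P a t) ^ 2

/-- normalized k-way cut of the partition `P`  -/
def fkCut {n k : ℕ} (W : Matrix (Fin n) (Fin n) ℝ) (P : Fin n → Fin k) : ℝ :=
  ∑ a, ∑ b ∈ univ.filter (fun b => a < b),
    (1 / gvol W (partSet P a) + 1 / gvol W (partSet P b)) * wcut W (partSet P a) (partSet P b)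

/-- minimum normalized k-way cut `f_k(G)` (minimum over k-partitions with nonempty parts) -/
def fkMin {n : ℕ} (k : ℕ) (W : Matrix (Fin n) (Fin n) ℝ) : ℝ :=
  sInf {r | ∃ P : Fin n → Fin k, Function.Surjective P ∧ r = fkCut W P}

/-- normalized k-way Newman-Girvan modularity of the partition `P` -/
def QMod {n k : ℕ} (W : Matrix (Fin n) (Fin n) ℝ) (P : Fin n → Fin k) : ℝ :=
  ∑ a, (gvol W (partSet P a))⁻¹ *
    (∑ i ∈ partSet P a, ∑ j ∈ partSet P a, (W i j - gdeg W i * gdeg W j))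

/-- squared Euclidean distance of a vector from a linear subspace of `ℝ^n` -/
def distSqToSub {n : ℕ} (u : Fin n → ℝ) (F : Submodule ℝ (Fin n → ℝ)) : ℝ :=
  sInf {r | ∃ v ∈ F, r = dotR (u - v) (u - v)}

theorem abs_dotProduct_mulVec_le_specNorm {n : ℕ} (M : Matrix (Fin n) (Fin n) ℝ)
    (x y : Fin n → ℝ) :
    |x ⬝ᵥ M *ᵥ y| ≤ specNorm M * (√(x ⬝ᵥ x) * √(y ⬝ᵥ y)) := by
  have hnorm (z : Fin n → ℝ) : ‖WithLp.toLp 2 z‖ = √(z ⬝ᵥ z) := by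
    simp [EuclideanSpace.norm_eq, dotProduct, sq]
  have hinner := inner_toEuclideanCLM M (WithLp.toLp 2 x) (WithLp.toLp 2 y)
  rw [WithLp.ofLp_toLp, WithLp.ofLp_toLp] at hinner
  rw [← hnorm, ← hnorm, mul_left_comm, ← hinner]
  exact (abs_real_inner_le_norm _ _).trans
    (mul_le_mul_of_nonneg_left (ContinuousLinearMap.le_opNorm _ _) (norm_nonneg _))

theorem sub_smul_dotProduct_mulVec_sub_smul {ι : Type*} [Fintype ι]
    (M : Matrix ι ι ℝ) (x y s t : ι → ℝ) (a b : ℝ) :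
    (x - a • s) ⬝ᵥ M *ᵥ (y - b • t)
      = x ⬝ᵥ M *ᵥ y - b * (x ⬝ᵥ M *ᵥ t) - a * (s ⬝ᵥ M *ᵥ y) + a * b * (s ⬝ᵥ M *ᵥ t) := by
  simp only [mulVec_sub, mulVec_smul, dotProduct_sub, sub_dotProduct, dotProduct_smul,
    smul_dotProduct, smul_eq_mul]
  ring

section WeightedGraph

variable {n : ℕ} {W : Matrix (Fin n) (Fin n) ℝ}

def sqrtDegOn (W : Matrix (Fin n) (Fin n) ℝ) (X : Finset (Fin n)) : Fin n → ℝ :=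
  fun i => if i ∈ X then √(gdeg W i) else 0

theorem gvol_nonneg (hd : ∀ i, 0 < gdeg W i) (U : Finset (Fin n)) : 0 ≤ gvol W U :=
  sum_nonneg fun i _ => (hd i).le

theorem gvol_le_one (hd : ∀ i, 0 < gdeg W i) (hvol : gvol W univ = 1) (U : Finset (Fin n)) :
    gvol W U ≤ 1 :=
  hvol ▸ sum_le_sum_of_subset_of_nonneg (subset_univ U) fun i _ _ => (hd i).le

theorem wcut_univ_right (X : Finset (Fin n)) : wcut W X univ = gvol W X := rfl

theorem wcut_univ_left (hsym : W.IsSymm) (Y : Finset (Fin n)) : wcut W univ Y = gvol W Y := by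
  unfold wcut gvol gdeg
  exact sum_comm.trans (sum_congr rfl fun j _ => sum_congr rfl fun i _ => hsym.apply j i)

theorem sqrtDegOn_dotProduct_sqrtDegOn (hd : ∀ i, 0 < gdeg W i) (X Y : Finset (Fin n)) :
    sqrtDegOn W X ⬝ᵥ sqrtDegOn W Y = gvol W (X ∩ Y) := by
  simp only [dotProduct, sqrtDegOn, ite_mul, zero_mul, mul_ite, mul_zero, ← ite_and, ← mem_inter,
    sum_ite_mem, univ_inter]
  exact sum_congr (inter_comm Y X) fun i _ => Real.mul_self_sqrt (hd i).le

theorem sqrt_gdeg_mul_modMat_mul_sqrt_gdeg (hd : ∀ i, 0 < gdeg W i) (i j : Fin n) :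
    √(gdeg W i) * (modMat W i j * √(gdeg W j)) = W i j - gdeg W i * gdeg W j := by
  have hi := Real.sqrt_pos.2 (hd i)
  have hj := Real.sqrt_pos.2 (hd j)
  simp only [modMat, normAdj, Matrix.sub_apply, of_apply]
  field_simp
  rw [Real.sq_sqrt (hd i).le, Real.sq_sqrt (hd j).le]

theorem sqrtDegOn_dotProduct_modMat_mulVec (hd : ∀ i, 0 < gdeg W i) (X Y : Finset (Fin n)) :
    sqrtDegOn W X ⬝ᵥ modMat W *ᵥ sqrtDegOn W Y = wcut W X Y - gvol W X * gvol W Y := by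
  simp only [dotProduct, mulVec, sqrtDegOn, mul_ite, mul_zero, ite_mul, zero_mul, sum_ite_mem,
    univ_inter]
  simp only [mul_sum, sqrt_gdeg_mul_modMat_mul_sqrt_gdeg hd, sum_sub_distrib]
  rw [wcut, gvol, gvol, sum_mul_sum]

def centeredSqrtDegOn (W : Matrix (Fin n) (Fin n) ℝ) (X : Finset (Fin n)) : Fin n → ℝ :=
  sqrtDegOn W X - gvol W X • sqrtDegOn W univ

theorem centeredSqrtDegOn_dotProduct_self (hd : ∀ i, 0 < gdeg W i) (hvol : gvol W univ = 1)
    (X : Finset (Fin n)) :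
    centeredSqrtDegOn W X ⬝ᵥ centeredSqrtDegOn W X = gvol W X * (1 - gvol W X) := by
  have := sub_smul_dotProduct_mulVec_sub_smul 1 (sqrtDegOn W X) (sqrtDegOn W X)
    (sqrtDegOn W univ) (sqrtDegOn W univ) (gvol W X) (gvol W X)
  simp only [one_mulVec, sqrtDegOn_dotProduct_sqrtDegOn hd, inter_self, inter_univ, univ_inter,
    hvol] at this
  rw [centeredSqrtDegOn, this]
  ring

theorem centeredSqrtDegOn_dotProduct_modMat_mulVec (hsym : W.IsSymm) (hd : ∀ i, 0 < gdeg W i)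
    (hvol : gvol W univ = 1) (X Y : Finset (Fin n)) :
    centeredSqrtDegOn W X ⬝ᵥ modMat W *ᵥ centeredSqrtDegOn W Y
      = wcut W X Y - gvol W X * gvol W Y := by
  rw [centeredSqrtDegOn, centeredSqrtDegOn, sub_smul_dotProduct_mulVec_sub_smul]
  simp only [sqrtDegOn_dotProduct_modMat_mulVec hd, wcut_univ_left hsym, wcut_univ_right, hvol]
  ring

end WeightedGraph

theorem statement3_general {n : ℕ} (W : Matrix (Fin n) (Fin n) ℝ)
    (hsym : W.IsSymm)
    (hd : ∀ i, 0 < gdeg W i) (hvol : gvol W Finset.univ = 1) :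
    ∀ X Y : Finset (Fin n),
      |wcut W X Y - gvol W X * gvol W Y|
          ≤ specNorm (modMat W) *
            Real.sqrt (gvol W X * (1 - gvol W X) * (gvol W Y * (1 - gvol W Y))) ∧
      specNorm (modMat W) *
          Real.sqrt (gvol W X * (1 - gvol W X) * (gvol W Y * (1 - gvol W Y)))
        ≤ specNorm (modMat W) * Real.sqrt (gvol W X * gvol W Y) := by
  intro X Y
  have ha0 := gvol_nonneg hd X
  have ha1 := gvol_le_one hd hvol X
  have hb0 := gvol_nonneg hd Y
  have hb1 := gvol_le_one hd hvol Y
  constructor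
  · rw [← centeredSqrtDegOn_dotProduct_modMat_mulVec hsym hd hvol,
      Real.sqrt_mul (mul_nonneg ha0 (sub_nonneg.2 ha1)),
      ← centeredSqrtDegOn_dotProduct_self hd hvol, ← centeredSqrtDegOn_dotProduct_self hd hvol]
    exact abs_dotProduct_mulVec_le_specNorm _ _ _
  · refine mul_le_mul_of_nonneg_left (Real.sqrt_le_sqrt ?_) (norm_nonneg _)
    calc gvol W X * (1 - gvol W X) * (gvol W Y * (1 - gvol W Y))
        = gvol W X * gvol W Y * ((1 - gvol W X) * (1 - gvol W Y)) := by ring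
      _ ≤ gvol W X * gvol W Y := mul_le_of_le_one_right (mul_nonneg ha0 hb0)
          (mul_le_one₀ (by linarith) (by linarith) (by linarith))

/-- Expander Mixing Lemma for weighted graphs. -/
theorem statement3 {n : ℕ} (W : Matrix (Fin n) (Fin n) ℝ)
    (hsym : W.IsSymm) (hnn : ∀ i j, 0 ≤ W i j) (hdiag : ∀ i, W i i = 0)
    (hd : ∀ i, 0 < gdeg W i) (hvol : gvol W Finset.univ = 1) :
    ∀ X Y : Finset (Fin n),
      |wcut W X Y - gvol W X * gvol W Y|
          ≤ specNorm (modMat W) *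
            Real.sqrt (gvol W X * (1 - gvol W X) * (gvol W Y * (1 - gvol W Y))) ∧
      specNorm (modMat W) *
          Real.sqrt (gvol W X * (1 - gvol W X) * (gvol W Y * (1 - gvol W Y)))
        ≤ specNorm (modMat W) * Real.sqrt (gvol W X * gvol W Y) :=
  statement3_general W hsym hd hvol

end
end

section
/- Let G=(V,W) be a connected edge-weighted graph with Vol(V)=1 and let λ_2 be the second smallest eigenvalue of the normalized Laplacian L_D. Then the isoperimetric number satisfies h(G) ≤ min{1, √(2λ_2)}. -/
open Finset Matrix

noncomputable section

/-! `h(G) ≤ 1` since `w(U, Uᶜ) ≤ Vol U` for every `U` and a vertex of minimum degree has volume at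
most `1/2`.

For `h(G) ≤ √(2λ₂)`, take an eigenvector `v ⊥ D^{1/2} 1` of `L_D` for `λ₂` and put
`g = D^{-1/2} v`, so that `(D - W) g = λ₂ D g` and `∑ dᵢ gᵢ = 0`. Replacing `g` by `-g` if
necessary, `{g > 0}` has volume at most `1/2`; the positive part `g⁺` then has Rayleigh quotient at
most `λ₂`, and a sweep over the superlevel sets of `(g⁺)²` finds one whose cut ratio is at most
`√(2λ₂)`. -/

section Basic

variable {n : ℕ} {W : Matrix (Fin n) (Fin n) ℝ}

lemma gdeg_nonneg (hnn : ∀ i j, 0 ≤ W i j) (i : Fin n) : 0 ≤ gdeg W i :=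
  sum_nonneg fun j _ => hnn i j

lemma gvol_mono (hnn : ∀ i j, 0 ≤ W i j) {U V : Finset (Fin n)} (h : U ⊆ V) :
    gvol W U ≤ gvol W V :=
  sum_le_sum_of_subset_of_nonneg h fun i _ _ => gdeg_nonneg hnn i

lemma wcut_nonneg (hnn : ∀ i j, 0 ≤ W i j) (X Y : Finset (Fin n)) : 0 ≤ wcut W X Y :=
  sum_nonneg fun i _ => sum_nonneg fun j _ => hnn i j

lemma wcut_le_gvol (hnn : ∀ i j, 0 ≤ W i j) (X Y : Finset (Fin n)) : wcut W X Y ≤ gvol W X :=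
  sum_le_sum fun i _ => sum_le_sum_of_subset_of_nonneg (subset_univ Y) fun j _ _ => hnn i j

lemma sum_apply_eq_gdeg (hsym : W.IsSymm) (j : Fin n) : ∑ i, W i j = gdeg W j :=
  sum_congr rfl fun i _ => hsym.apply j i

lemma wcut_comm (hsym : W.IsSymm) (X Y : Finset (Fin n)) : wcut W X Y = wcut W Y X := by
  rw [wcut, sum_comm (f := fun i j => W i j)]
  exact sum_congr rfl fun j _ => sum_congr rfl fun i _ => hsym.apply j i

lemma isoNum_le_of_cut (hnn : ∀ i j, 0 ≤ W i j) {U : Finset (Fin n)} {c : ℝ}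
    (hU : 0 < gvol W U) (hhalf : gvol W U ≤ 1 / 2) (hcut : wcut W U Uᶜ ≤ c * gvol W U) :
    isoNum W ≤ c := by
  have hne : U.Nonempty := nonempty_iff_ne_empty.2 (by rintro rfl; simp [gvol] at hU)
  have hbdd : BddBelow {r | ∃ V : Finset (Fin n), V.Nonempty ∧ gvol W V ≤ 1 / 2 ∧
      r = wcut W V Vᶜ / gvol W V} := by
    refine ⟨0, ?_⟩
    rintro _ ⟨V, -, -, rfl⟩
    exact div_nonneg (wcut_nonneg hnn _ _) (sum_nonneg fun i _ => gdeg_nonneg hnn i)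
  exact (csInf_le hbdd ⟨U, hne, hhalf, rfl⟩).trans ((div_le_iff₀ hU).2 hcut)

lemma isoNum_le_one (hnn : ∀ i j, 0 ≤ W i j) (hd : ∀ i, 0 < gdeg W i)
    (hvol : gvol W univ = 1) (hn : 2 ≤ n) : isoNum W ≤ 1 := by
  have : Nontrivial (Fin n) := Fin.nontrivial_iff_two_le.2 hn
  obtain ⟨i, -, hmin⟩ := exists_min_image univ (gdeg W) univ_nonempty
  obtain ⟨j, hji⟩ := exists_ne i
  have hpair : gdeg W i + gdeg W j ≤ 1 := by
    rw [← sum_pair hji.symm, ← hvol]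
    exact gvol_mono hnn (subset_univ _)
  have hdeg : gvol W {i} = gdeg W i := sum_singleton _ _
  refine isoNum_le_of_cut hnn (U := {i}) (hdeg ▸ hd i) ?_ ?_
  · linarith [hmin j (mem_univ j)]
  · simpa only [one_mul] using wcut_le_gvol hnn {i} {i}ᶜ

end Basic

/-- The eigen-equation `(D - W) g = μ D g`, solved by `g = D^{-1/2} v` for every eigenvector `v`
of `normLap W` with eigenvalue `μ`. -/
def IsGenEigenvector {n : ℕ} (W : Matrix (Fin n) (Fin n) ℝ) (μ : ℝ) (g : Fin n → ℝ) : Prop :=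
  ∀ i, gdeg W i * g i - ∑ j, W i j * g j = μ * (gdeg W i * g i)

section Quadratic

variable {n : ℕ} {W : Matrix (Fin n) (Fin n) ℝ}

lemma sum_sum_mul_sq_left (f : Fin n → ℝ) :
    ∑ i, ∑ j, W i j * f i ^ 2 = ∑ i, gdeg W i * f i ^ 2 :=
  sum_congr rfl fun i _ => by rw [gdeg, sum_mul]

lemma sum_sum_mul_sq_right (hsym : W.IsSymm) (f : Fin n → ℝ) :
    ∑ i, ∑ j, W i j * f j ^ 2 = ∑ i, gdeg W i * f i ^ 2 := by
  rw [sum_comm]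
  exact sum_congr rfl fun j _ => by rw [← sum_mul, sum_apply_eq_gdeg hsym]

lemma sum_sum_mul_sub_sq (hsym : W.IsSymm) (f : Fin n → ℝ) :
    ∑ i, ∑ j, W i j * (f i - f j) ^ 2
      = 2 * (∑ i, gdeg W i * f i ^ 2 - ∑ i, ∑ j, W i j * (f i * f j)) := by
  have hexpand : ∀ i j, W i j * (f i - f j) ^ 2
      = W i j * f i ^ 2 + W i j * f j ^ 2 - 2 * (W i j * (f i * f j)) := fun i j => by ring
  simp only [hexpand, sum_add_distrib, sum_sub_distrib, ← mul_sum,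
    sum_sum_mul_sq_left, sum_sum_mul_sq_right hsym]
  ring

lemma sum_sum_mul_add_sq_le (hsym : W.IsSymm) (hnn : ∀ i j, 0 ≤ W i j) (f : Fin n → ℝ) :
    ∑ i, ∑ j, W i j * (f i + f j) ^ 2 ≤ 4 * ∑ i, gdeg W i * f i ^ 2 := calc
  _ ≤ ∑ i, ∑ j, (2 * (W i j * f i ^ 2) + 2 * (W i j * f j ^ 2)) :=
    sum_le_sum fun i _ => sum_le_sum fun j _ => by
      nlinarith [hnn i j, mul_nonneg (hnn i j) (sq_nonneg (f i - f j))]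
  _ = 4 * ∑ i, gdeg W i * f i ^ 2 := by
    simp only [sum_add_distrib, ← mul_sum, sum_sum_mul_sq_left, sum_sum_mul_sq_right hsym]
    ring

namespace IsGenEigenvector

variable {μ : ℝ} {g : Fin n → ℝ}

lemma neg (hg : IsGenEigenvector W μ g) : IsGenEigenvector W μ (-g) := fun i => by
  simp only [Pi.neg_apply, mul_neg, sum_neg_distrib]
  linarith [hg i]

lemma sum_gdeg_mul_eq_zero (hsym : W.IsSymm) (hg : IsGenEigenvector W μ g) (hμ : μ ≠ 0) :
    ∑ i, gdeg W i * g i = 0 := by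
  have hsum := sum_congr rfl fun i (_ : i ∈ univ) => hg i
  rw [sum_sub_distrib, ← mul_sum, sum_comm] at hsum
  simp only [← sum_mul, sum_apply_eq_gdeg hsym, sub_self] at hsum
  exact (mul_eq_zero.1 hsum.symm).resolve_left hμ

/-- Test the eigen-equation against `g⁺` and use `g ≤ g⁺` off the diagonal. -/
lemma sum_sum_mul_sub_sq_posPart_le (hsym : W.IsSymm) (hnn : ∀ i j, 0 ≤ W i j)
    (hg : IsGenEigenvector W μ g) :
    ∑ i, ∑ j, W i j * (max (g i) 0 - max (g j) 0) ^ 2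
      ≤ 2 * μ * ∑ i, gdeg W i * max (g i) 0 ^ 2 := by
  set f : Fin n → ℝ := fun i => max (g i) 0
  have hfg : ∀ i, f i * g i = f i ^ 2 := fun i => by
    rcases le_total (g i) 0 with h | h
    · simp [f, max_eq_right h]
    · simp [f, max_eq_left h, sq]
  have htest : ∑ i, f i * (gdeg W i * g i - ∑ j, W i j * g j) = μ * ∑ i, gdeg W i * f i ^ 2 := by
    rw [mul_sum]
    refine sum_congr rfl fun i _ => ?_
    rw [hg i, ← hfg i]
    ring
  have hoff : ∑ i, f i * ∑ j, W i j * g j ≤ ∑ i, ∑ j, W i j * (f i * f j) :=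
    sum_le_sum fun i _ => by
      rw [mul_sum]
      exact sum_le_sum fun j _ => by
        nlinarith [mul_le_mul_of_nonneg_left (le_max_left (g j) 0)
          (mul_nonneg (hnn i j) (le_max_right (g i) 0))]
  have hdeg_term : ∑ i, f i * (gdeg W i * g i) = ∑ i, gdeg W i * f i ^ 2 :=
    sum_congr rfl fun i _ => by rw [← hfg i]; ring
  simp only [mul_sub, sum_sub_distrib, hdeg_term] at htest
  rw [sum_sum_mul_sub_sq hsym]
  linarith

end IsGenEigenvector

end Quadratic

section Coarea

lemma exists_monotone_rank {n : ℕ} (hn : 0 < n) (β : Fin n → ℝ) :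
    ∃ (c : ℕ → ℝ) (rk : Fin n → ℕ), Monotone c ∧ (∀ i, rk i ≤ n - 1) ∧
      β = (fun i => c (rk i)) ∧ ∃ i, c 0 = β i := by
  set σ := Tuple.sort β
  have hσ : Monotone (β ∘ σ) := Tuple.monotone_sort β
  refine ⟨fun r => β (σ ⟨min r (n - 1), by omega⟩), fun i => σ.symm i,
    fun a b hab => hσ (Fin.mk_le_mk.2 (by omega)), fun i => Nat.le_sub_one_of_lt (σ.symm i).isLt,
    funext fun i => ?_, ⟨_, rfl⟩⟩
  have hmin : (⟨min (σ.symm i : ℕ) (n - 1), by omega⟩ : Fin n) = σ.symm i :=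
    Fin.ext (by have := (σ.symm i).isLt; simp only; omega)
  simp only [hmin, Equiv.apply_symm_apply]

lemma exists_pos_and_le_of_sum_le {ι : Type*} {s : Finset ι} {w a b : ι → ℝ} {t : ℝ}
    (hw : ∀ r ∈ s, 0 ≤ w r) (ha : ∀ r ∈ s, 0 ≤ a r) (hb : ∀ r ∈ s, 0 ≤ b r)
    (hpos : 0 < ∑ r ∈ s, w r * b r) (hle : ∑ r ∈ s, w r * a r ≤ t * ∑ r ∈ s, w r * b r) :
    ∃ r ∈ s, 0 < w r ∧ 0 < b r ∧ a r ≤ t * b r := by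
  classical
  set F := s.filter fun r => 0 < w r * b r
  have hbF : ∑ r ∈ F, w r * b r = ∑ r ∈ s, w r * b r :=
    sum_filter_of_ne fun r hr hne => lt_of_le_of_ne (mul_nonneg (hw r hr) (hb r hr)) hne.symm
  have haF : ∑ r ∈ F, w r * a r ≤ ∑ r ∈ s, w r * a r :=
    sum_le_sum_of_subset_of_nonneg (filter_subset _ _) fun r hr _ =>
      mul_nonneg (hw r hr) (ha r hr)
  have hF : F.Nonempty := by
    by_contra hF
    rw [not_nonempty_iff_eq_empty.1 hF, sum_empty] at hbF
    linarith
  obtain ⟨r, hrF, hr⟩ := exists_le_of_sum_le hF (f := fun r => w r * a r)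
    (g := fun r => t * (w r * b r)) (by rw [← mul_sum, hbF]; linarith)
  obtain ⟨hrs, hwb⟩ := mem_filter.1 hrF
  have hwr : 0 < w r := lt_of_le_of_ne (hw r hrs) fun h => by simp [← h] at hwb
  refine ⟨r, hrs, hwr, pos_of_mul_pos_right hwb (hw r hrs), ?_⟩
  exact le_of_mul_le_mul_left (by linarith) hwr

lemma layer_cake {c : ℕ → ℝ} (hc0 : c 0 = 0) {k K : ℕ} (hk : k ≤ K) :
    c k = ∑ r ∈ range K, if r < k then c (r + 1) - c r else 0 := by
  rw [← sum_filter, show (range K).filter (· < k) = range k by ext; simp; omega,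
    sum_range_sub, hc0, sub_zero]

lemma abs_sub_eq_sum_layers {c : ℕ → ℝ} (hc0 : c 0 = 0) (hc : Monotone c) {k l K : ℕ}
    (hk : k ≤ K) (hl : l ≤ K) :
    |c k - c l| = ∑ r ∈ range K,
      (c (r + 1) - c r) * |(if r < k then 1 else 0) - (if r < l then 1 else 0)| := by
  wlog hlk : l ≤ k generalizing k l
  · rw [abs_sub_comm, this hl hk (le_of_not_ge hlk)]
    exact sum_congr rfl fun r _ => by rw [abs_sub_comm (ite _ _ _)]
  rw [abs_of_nonneg (sub_nonneg.2 (hc hlk)), layer_cake hc0 hk, layer_cake hc0 hl,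
    ← sum_sub_distrib]
  refine sum_congr rfl fun r _ => ?_
  by_cases hrl : r < l
  · simp [hrl, lt_of_lt_of_le hrl hlk]
  · by_cases hrk : r < k <;> simp [hrl, hrk]

variable {n : ℕ} {W : Matrix (Fin n) (Fin n) ℝ}

lemma sum_sum_mul_abs_indicator_sub (hsym : W.IsSymm) (T : Finset (Fin n)) :
    ∑ i, ∑ j, W i j * |(if i ∈ T then 1 else 0) - (if j ∈ T then 1 else 0)|
      = 2 * wcut W T Tᶜ := by
  have hsplit : ∀ i j, W i j * |(if i ∈ T then 1 else 0) - (if j ∈ T then 1 else 0)|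
      = (if i ∈ T then if j ∈ Tᶜ then W i j else 0 else 0)
        + (if i ∈ Tᶜ then if j ∈ T then W i j else 0 else 0) := fun i j => by
    by_cases hi : i ∈ T <;> by_cases hj : j ∈ T <;> simp [hi, hj]
  rw [two_mul]
  nth_rw 2 [wcut_comm hsym]
  simp only [hsplit, sum_add_distrib, sum_ite_irrel, sum_const_zero, sum_ite_mem, univ_inter, wcut]

def rankSuperlevel (rk : Fin n → ℕ) (r : ℕ) : Finset (Fin n) :=
  univ.filter fun i => r < rk i

variable {c : ℕ → ℝ} {rk : Fin n → ℕ} {K : ℕ}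

lemma sum_gdeg_mul_eq_sum_layers (hc0 : c 0 = 0) (hrk : ∀ i, rk i ≤ K) :
    ∑ i, gdeg W i * c (rk i)
      = ∑ r ∈ range K, (c (r + 1) - c r) * gvol W (rankSuperlevel rk r) := by
  simp_rw [gvol, rankSuperlevel, sum_filter, mul_sum]
  rw [sum_comm]
  refine sum_congr rfl fun i _ => ?_
  rw [layer_cake hc0 (hrk i), mul_sum]
  exact sum_congr rfl fun r _ => by split_ifs <;> ring

lemma sum_sum_mul_abs_sub_eq_sum_layers (hsym : W.IsSymm) (hc0 : c 0 = 0) (hc : Monotone c)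
    (hrk : ∀ i, rk i ≤ K) :
    ∑ i, ∑ j, W i j * |c (rk i) - c (rk j)|
      = ∑ r ∈ range K,
          (c (r + 1) - c r) * (2 * wcut W (rankSuperlevel rk r) (rankSuperlevel rk r)ᶜ) := by
  have hmem : ∀ r i, (i ∈ rankSuperlevel rk r) = (r < rk i) := by simp [rankSuperlevel]
  simp_rw [← sum_sum_mul_abs_indicator_sub hsym, hmem, mul_sum,
    abs_sub_eq_sum_layers hc0 hc (hrk _) (hrk _), mul_sum]
  rw [sum_comm (s := range K)]
  refine sum_congr rfl fun i _ => ?_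
  rw [sum_comm (s := range K)]
  refine sum_congr rfl fun j _ => sum_congr rfl fun r _ => by ring

end Coarea

section Cheeger

variable {n : ℕ} {W : Matrix (Fin n) (Fin n) ℝ}

/-- Both sums decompose over the superlevel sets of `β` (discrete coarea formula), so one of
these sets has ratio at most `s`. -/
lemma exists_superlevel_cut_le (hsym : W.IsSymm) (hnn : ∀ i j, 0 ≤ W i j) {β : Fin n → ℝ}
    (hβ : ∀ i, 0 ≤ β i) (hzero : ∃ i, β i = 0) {s : ℝ} (hpos : 0 < ∑ i, gdeg W i * β i)
    (hle : ∑ i, ∑ j, W i j * |β i - β j| ≤ 2 * s * ∑ i, gdeg W i * β i) :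
    ∃ U : Finset (Fin n), 0 < gvol W U ∧ (∀ i ∈ U, 0 < β i) ∧ wcut W U Uᶜ ≤ s * gvol W U := by
  obtain ⟨iz, hiz⟩ := hzero
  obtain ⟨c, rk, hc, hrk, rfl, i₀, hi₀⟩ := exists_monotone_rank iz.pos β
  have hc0 : c 0 = 0 := le_antisymm (hiz ▸ hc (Nat.zero_le _)) (hi₀ ▸ hβ i₀)
  rw [sum_gdeg_mul_eq_sum_layers hc0 hrk] at hpos hle
  rw [sum_sum_mul_abs_sub_eq_sum_layers hsym hc0 hc hrk] at hle
  obtain ⟨r, -, hΔ, hvol, hcut⟩ := exists_pos_and_le_of_sum_le (t := s)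
    (a := fun r => wcut W (rankSuperlevel rk r) (rankSuperlevel rk r)ᶜ)
    (b := fun r => gvol W (rankSuperlevel rk r))
    (fun r _ => sub_nonneg.2 (hc r.le_succ)) (fun r _ => wcut_nonneg hnn _ _)
    (fun r _ => sum_nonneg fun i _ => gdeg_nonneg hnn i) hpos (by
      simp only [mul_left_comm _ (2 : ℝ), ← mul_sum, mul_assoc] at hle
      linarith)
  refine ⟨_, hvol, fun i hi => ?_, hcut⟩
  have hri : r + 1 ≤ rk i := (mem_filter.1 hi).2
  have hcr : 0 ≤ c r := hc0 ▸ hc (Nat.zero_le r)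
  linarith [hc hri]

lemma sum_sum_mul_abs_sq_sub_sq_le (hsym : W.IsSymm) (hnn : ∀ i j, 0 ≤ W i j)
    (f : Fin n → ℝ) :
    ∑ i, ∑ j, W i j * |f i ^ 2 - f j ^ 2|
      ≤ √(∑ i, ∑ j, W i j * (f i - f j) ^ 2) * √(4 * ∑ i, gdeg W i * f i ^ 2) := by
  have hfactor : ∀ i j, W i j * |f i ^ 2 - f j ^ 2|
      = √(W i j * (f i - f j) ^ 2) * √(W i j * (f i + f j) ^ 2) := fun i j => by
    rw [← Real.sqrt_mul (mul_nonneg (hnn i j) (sq_nonneg _)),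
      show W i j * (f i - f j) ^ 2 * (W i j * (f i + f j) ^ 2)
        = (W i j * |f i ^ 2 - f j ^ 2|) ^ 2 by rw [mul_pow, sq_abs]; ring,
      Real.sqrt_sq (mul_nonneg (hnn i j) (abs_nonneg _))]
  simp_rw [hfactor]
  rw [← Fintype.sum_prod_type'
    (fun i j => √(W i j * (f i - f j) ^ 2) * √(W i j * (f i + f j) ^ 2))]
  refine (Real.sum_sqrt_mul_sqrt_le univ
    (fun p : Fin n × Fin n => mul_nonneg (hnn p.1 p.2) (sq_nonneg _))
    (fun p : Fin n × Fin n => mul_nonneg (hnn p.1 p.2) (sq_nonneg _))).trans ?_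
  rw [Fintype.sum_prod_type' (fun i j => W i j * (f i - f j) ^ 2),
    Fintype.sum_prod_type' (fun i j => W i j * (f i + f j) ^ 2)]
  gcongr
  exact sum_sum_mul_add_sq_le hsym hnn f

/-- Cheeger rounding, applied to `f²`: Cauchy–Schwarz bounds its variation
`∑ wᵢⱼ |fᵢ² - fⱼ²|` by `2 √(2μ) ∑ dᵢ fᵢ²`. -/
lemma exists_cut_le_sqrt_of_rayleigh_le (hsym : W.IsSymm) (hnn : ∀ i j, 0 ≤ W i j)
    (hd : ∀ i, 0 < gdeg W i) {f : Fin n → ℝ} (hf : ∀ i, 0 ≤ f i) (hzero : ∃ i, f i = 0)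
    (hpos : ∃ i, 0 < f i) {μ : ℝ}
    (hray : ∑ i, ∑ j, W i j * (f i - f j) ^ 2 ≤ 2 * μ * ∑ i, gdeg W i * f i ^ 2) :
    ∃ U : Finset (Fin n), 0 < gvol W U ∧ (∀ i ∈ U, 0 < f i) ∧
      wcut W U Uᶜ ≤ √(2 * μ) * gvol W U := by
  set M := ∑ i, gdeg W i * f i ^ 2
  obtain ⟨i₁, hi₁⟩ := hpos
  have hM : 0 < M := sum_pos' (fun i _ => mul_nonneg (hd i).le (sq_nonneg _))
    ⟨i₁, mem_univ _, mul_pos (hd i₁) (pow_pos hi₁ 2)⟩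
  have hμ : 0 ≤ 2 * μ := nonneg_of_mul_nonneg_left ((sum_nonneg fun i _ =>
    sum_nonneg fun j _ => mul_nonneg (hnn i j) (sq_nonneg _)).trans hray) hM
  have hvar : ∑ i, ∑ j, W i j * |f i ^ 2 - f j ^ 2| ≤ 2 * √(2 * μ) * M := calc
    _ ≤ √(2 * μ * M) * √(4 * M) :=
      (sum_sum_mul_abs_sq_sub_sq_le hsym hnn f).trans (by gcongr)
    _ = 2 * √(2 * μ) * M := by
      rw [← Real.sqrt_mul (by positivity), show 2 * μ * M * (4 * M) = (2 * √(2 * μ) * M) ^ 2 by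
        rw [mul_pow, mul_pow, Real.sq_sqrt hμ]; ring, Real.sqrt_sq (by positivity)]
  obtain ⟨iz, hiz⟩ := hzero
  obtain ⟨U, hU, hUpos, hcut⟩ := exists_superlevel_cut_le hsym hnn (β := fun i => f i ^ 2)
    (fun i => sq_nonneg _) ⟨iz, by simp [hiz]⟩ hM hvar
  exact ⟨U, hU, fun i hi => lt_of_le_of_ne (hf i) fun h => by simpa [← h] using hUpos i hi, hcut⟩

namespace IsGenEigenvector

variable {μ : ℝ} {g : Fin n → ℝ}

lemma isoNum_le_of_gvol_filter_pos_le_half (hsym : W.IsSymm) (hnn : ∀ i j, 0 ≤ W i j)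
    (hd : ∀ i, 0 < gdeg W i) (hvol : gvol W univ = 1) (hg : IsGenEigenvector W μ g)
    (hpos : ∃ i, 0 < g i) (hhalf : gvol W (univ.filter fun i => 0 < g i) ≤ 1 / 2) :
    isoNum W ≤ √(2 * μ) := by
  have hzero : ∃ i, max (g i) 0 = 0 := by
    by_contra! h
    have hall : univ.filter (fun i => 0 < g i) = univ := filter_true_of_mem fun i _ =>
      lt_of_not_ge fun hi => h i (max_eq_right hi)
    rw [hall, hvol] at hhalf
    norm_num at hhalf
  obtain ⟨U, hU, hUpos, hcut⟩ := exists_cut_le_sqrt_of_rayleigh_le hsym hnn hd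
    (fun i => le_max_right (g i) 0) hzero (hpos.imp fun i hi => lt_max_of_lt_left hi)
    (hg.sum_sum_mul_sub_sq_posPart_le hsym hnn)
  have hsub : U ⊆ univ.filter fun i => 0 < g i := fun i hi =>
    mem_filter.2 ⟨mem_univ i, by simpa using hUpos i hi⟩
  exact isoNum_le_of_cut hnn hU ((gvol_mono hnn hsub).trans hhalf) hcut

lemma isoNum_le (hsym : W.IsSymm) (hnn : ∀ i j, 0 ≤ W i j) (hd : ∀ i, 0 < gdeg W i)
    (hvol : gvol W univ = 1) (hg : IsGenEigenvector W μ g)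
    (hsum : ∑ i, gdeg W i * g i = 0) (hne : ∃ i, g i ≠ 0) : isoNum W ≤ √(2 * μ) := by
  have hsigns : ∀ g' : Fin n → ℝ, ∑ i, gdeg W i * g' i = 0 → (∃ i, g' i ≠ 0) → ∃ i, 0 < g' i :=
    fun g' hs ⟨i, hi⟩ => by
      obtain ⟨j, -, hj⟩ := exists_pos_of_sum_zero_of_exists_nonzero _ hs
        ⟨i, mem_univ i, mul_ne_zero (hd i).ne' hi⟩
      exact ⟨j, pos_of_mul_pos_right hj (hd j).le⟩
  have hdisj : Disjoint (univ.filter fun i => 0 < g i) (univ.filter fun i => 0 < (-g) i) :=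
    disjoint_filter.2 fun i _ h h' => by simp at h'; linarith
  have hsplit : gvol W (univ.filter fun i => 0 < g i) + gvol W (univ.filter fun i => 0 < (-g) i)
      ≤ 1 := by
    rw [gvol, gvol, ← sum_union hdisj, ← hvol]
    exact gvol_mono hnn (subset_univ _)
  rcases le_or_gt (gvol W (univ.filter fun i => 0 < g i)) (1 / 2) with hP | hP
  · exact hg.isoNum_le_of_gvol_filter_pos_le_half hsym hnn hd hvol (hsigns g hsum hne) hP
  · exact hg.neg.isoNum_le_of_gvol_filter_pos_le_half hsym hnn hd hvol
      (hsigns (-g) (by simp [hsum]) (by simpa using hne)) (by linarith)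

end IsGenEigenvector

lemma mul_div_sqrt_self {x : ℝ} (y : ℝ) : x * (y / √x) = √x * y := by
  rw [mul_div_left_comm, Real.div_sqrt, mul_comm]

lemma isGenEigenvector_of_normLap (hd : ∀ i, 0 < gdeg W i) {μ : ℝ} {v : Fin n → ℝ}
    (hv : normLap W *ᵥ v = μ • v) : IsGenEigenvector W μ (fun i => v i / √(gdeg W i)) := by
  intro i
  have hi := congrFun hv i
  rw [normLap, sub_mulVec, one_mulVec, Pi.sub_apply] at hi
  simp only [mulVec, dotProduct, normAdj, of_apply, Pi.smul_apply, smul_eq_mul] at hi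
  have hs : ∀ j, √(gdeg W j) ≠ 0 := fun j => (Real.sqrt_pos.2 (hd j)).ne'
  have hterm : ∀ j, W i j * (v j / √(gdeg W j))
      = √(gdeg W i) * (W i j / (√(gdeg W i) * √(gdeg W j)) * v j) := fun j => by
    field_simp [hs i, hs j]
  simp only [mul_div_sqrt_self, hterm, ← mul_sum, ← mul_sub, hi]
  ring

lemma sum_sqrt_gdeg_mul_eq_zero_of_normLap (hsym : W.IsSymm) (hd : ∀ i, 0 < gdeg W i)
    {μ : ℝ} (hμ : μ ≠ 0) {v : Fin n → ℝ} (hv : normLap W *ᵥ v = μ • v) :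
    ∑ i, √(gdeg W i) * v i = 0 := by
  simpa only [mul_div_sqrt_self] using
    (isGenEigenvector_of_normLap hd hv).sum_gdeg_mul_eq_zero hsym hμ

lemma isoNum_le_sqrt_of_normLap (hsym : W.IsSymm) (hnn : ∀ i j, 0 ≤ W i j)
    (hd : ∀ i, 0 < gdeg W i) (hvol : gvol W univ = 1) {μ : ℝ} {v : Fin n → ℝ}
    (hv : normLap W *ᵥ v = μ • v) (hv0 : v ≠ 0) (hperp : ∑ i, √(gdeg W i) * v i = 0) :
    isoNum W ≤ √(2 * μ) := by
  refine (isGenEigenvector_of_normLap hd hv).isoNum_le hsym hnn hd hvol ?_ ?_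
  · simpa only [mul_div_sqrt_self] using hperp
  · obtain ⟨i, hi⟩ := Function.ne_iff.1 hv0
    exact ⟨i, div_ne_zero hi (Real.sqrt_pos.2 (hd i)).ne'⟩

/-- For `μ ≠ 0`, `u j` is orthogonal to `D^{1/2} 1 ∈ ker L` by symmetry of `L`; for `μ = 0`, some
nonzero combination of `u i` and `u j` is. -/
lemma exists_normLap_eigenvector_perp (hsym : W.IsSymm) (hd : ∀ i, 0 < gdeg W i) {m : ℕ}
    {u : Fin m → Fin n → ℝ} (hortho : IsOrthonormalSys u) {i j : Fin m} (hij : i ≠ j)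
    (hi : normLap W *ᵥ u i = 0) {μ : ℝ} (hj : normLap W *ᵥ u j = μ • u j) :
    ∃ v, v ≠ 0 ∧ normLap W *ᵥ v = μ • v ∧ ∑ k, √(gdeg W k) * v k = 0 := by
  have hdot : ∀ k l, u k ⬝ᵥ u l = if k = l then 1 else 0 := hortho
  by_cases hμ : μ = 0
  · subst hμ
    set s : Fin n → ℝ := fun k => √(gdeg W k)
    obtain ⟨a, b, hab, hperp⟩ :
        ∃ a b : ℝ, (a ≠ 0 ∨ b ≠ 0) ∧ a * (s ⬝ᵥ u i) + b * (s ⬝ᵥ u j) = 0 := by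
      by_cases h : s ⬝ᵥ u i = 0
      · exact ⟨1, 0, by simp, by simp [h]⟩
      · exact ⟨s ⬝ᵥ u j, -(s ⬝ᵥ u i), Or.inr (neg_ne_zero.2 h), by ring⟩
    refine ⟨a • u i + b • u j, fun h0 => ?_, by simp [mulVec_add, mulVec_smul, hi, hj], ?_⟩
    · have ha := congrArg (· ⬝ᵥ u i) h0
      have hb := congrArg (· ⬝ᵥ u j) h0
      simp [add_dotProduct, smul_dotProduct, hdot, hij, hij.symm] at ha hb
      tauto
    · change s ⬝ᵥ (a • u i + b • u j) = 0
      rwa [dotProduct_add, dotProduct_smul, dotProduct_smul, smul_eq_mul, smul_eq_mul]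
  · have hne : u j ≠ 0 := fun h => by simpa [h] using hdot j j
    exact ⟨u j, hne, hj, sum_sqrt_gdeg_mul_eq_zero_of_normLap hsym hd hμ hj⟩

end Cheeger

/-- `h(G) ≤ min {1, √(2 λ₂)}`. -/
theorem statement5 {n : ℕ} (hn : 2 ≤ n) (W : Matrix (Fin n) (Fin n) ℝ)
    (hsym : W.IsSymm) (hnn : ∀ i j, 0 ≤ W i j)
    (hd : ∀ i, 0 < gdeg W i) (hvol : gvol W Finset.univ = 1)
    (lam : Fin n → ℝ) (u : Fin n → Fin n → ℝ)
    (hortho : IsOrthonormalSys u)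
    (heig : ∀ i, normLap W *ᵥ u i = lam i • u i)
    (h0 : lam ⟨0, by omega⟩ = 0) :
    isoNum W ≤ min 1 (Real.sqrt (2 * lam ⟨1, by omega⟩)) := by
  refine le_min (isoNum_le_one hnn hd hvol hn) ?_
  obtain ⟨v, hv0, hv, hperp⟩ := exists_normLap_eigenvector_perp hsym hd hortho
    (i := ⟨0, by omega⟩) (j := ⟨1, by omega⟩) (by simp [Fin.ext_iff])
    (by rw [heig, h0, zero_smul]) (heig _)
  exact isoNum_le_sqrt_of_normLap hsym hnn hd hvol hv hv0 hperp
end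
end

section
/- Let G=(V,W) be a connected edge-weighted graph on n ≥ 3 vertices with Vol(V)=1, let 0 = λ_1 < λ_2 ≤ λ_3 ≤ ... be the eigenvalues of the normalized Laplacian L_D, and let u_2 be a unit-norm eigenvector belonging to λ_2. Then the weighted 2-variance of the coordinates of the vector D^{-1/2}u_2 satisfies S_2²(D^{-1/2}u_2) ≤ λ_2/λ_3. -/
open Finset Matrix

noncomputable section

/-!
Put `x = D^{-1/2} u₂`, so that `∑ dⱼ xⱼ = 0` and `∑ dⱼ xⱼ² = 1`. By the intermediate value theorem
there is a `γ` with `∑ dⱼ xⱼ |xⱼ - γ| = 0`; let `φ = |x - γ| - α`, with `α` the weighted mean of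
`|x - γ|`. Then `D^{1/2} φ` is orthogonal to `u₁ ∝ D^{1/2} 𝟙` and to `u₂ = D^{1/2} x`, so
`λ₃ ∑ dⱼ φⱼ²` is at most its Dirichlet energy `½ ∑ wᵢⱼ (φᵢ - φⱼ)²`. Since `φ` is a contraction of
`x`, that energy is at most the energy `λ₂` of `u₂`. Finally, measured from the centres `γ ± α`, the split
`{x > γ}, {x ≤ γ}` has weighted sum of squares exactly `∑ dⱼ φⱼ²`.
-/

namespace IsOrthonormalSys

variable {n : ℕ} {u : Fin n → Fin n → ℝ}

theorem dotProduct_eq (hu : IsOrthonormalSys u) (i j : Fin n) :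
    u i ⬝ᵥ u j = if i = j then 1 else 0 :=
  hu i j

theorem sum_dotProduct_smul (hu : IsOrthonormalSys u) (v : Fin n → ℝ) :
    ∑ i, (u i ⬝ᵥ v) • u i = v := by
  have hU : Matrix.of u * (Matrix.of u)ᵀ = 1 := by
    ext i j
    simpa [Matrix.mul_apply, Matrix.one_apply, dotR] using hu i j
  calc ∑ i, (u i ⬝ᵥ v) • u i = (Matrix.of u)ᵀ *ᵥ (Matrix.of u *ᵥ v) := by
        rw [Matrix.mulVec_transpose, Matrix.vecMul_eq_sum]; rfl
    _ = v := by rw [Matrix.mulVec_mulVec, mul_eq_one_comm.mp hU, Matrix.one_mulVec]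

theorem dotProduct_self (hu : IsOrthonormalSys u) (v : Fin n → ℝ) :
    v ⬝ᵥ v = ∑ i, (u i ⬝ᵥ v) ^ 2 := by
  nth_rw 1 [← hu.sum_dotProduct_smul v]
  simp only [sum_dotProduct, smul_dotProduct, smul_eq_mul, sq]

theorem dotProduct_mulVec {L : Matrix (Fin n) (Fin n) ℝ} {lam : Fin n → ℝ}
    (hu : IsOrthonormalSys u) (heig : ∀ i, L *ᵥ u i = lam i • u i) (v : Fin n → ℝ) :
    v ⬝ᵥ (L *ᵥ v) = ∑ i, lam i * (u i ⬝ᵥ v) ^ 2 := by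
  nth_rw 2 [← hu.sum_dotProduct_smul v]
  simp only [Matrix.mulVec_sum, Matrix.mulVec_smul, heig, dotProduct_sum, dotProduct_smul,
    smul_eq_mul]
  exact Finset.sum_congr rfl fun i _ => by rw [dotProduct_comm v]; ring

theorem mul_dotProduct_self_le {L : Matrix (Fin n) (Fin n) ℝ} {lam : Fin n → ℝ} {μ : ℝ}
    (hu : IsOrthonormalSys u) (heig : ∀ i, L *ᵥ u i = lam i • u i) {v : Fin n → ℝ}
    (hμ : ∀ i, u i ⬝ᵥ v ≠ 0 → μ ≤ lam i) :
    μ * (v ⬝ᵥ v) ≤ v ⬝ᵥ (L *ᵥ v) := by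
  rw [hu.dotProduct_self, hu.dotProduct_mulVec heig, Finset.mul_sum]
  refine Finset.sum_le_sum fun i _ => ?_
  by_cases hi : u i ⬝ᵥ v = 0
  · simp [hi]
  · exact mul_le_mul_of_nonneg_right (hμ i hi) (sq_nonneg _)

theorem eq_smul_of_mulVec_eq_zero {L : Matrix (Fin n) (Fin n) ℝ} {lam : Fin n → ℝ}
    (hu : IsOrthonormalSys u) (hL : L.IsSymm) (heig : ∀ i, L *ᵥ u i = lam i • u i)
    {z : Fin n → ℝ} (hz : L *ᵥ z = 0) {i₀ : Fin n} (hlam : ∀ i ≠ i₀, lam i ≠ 0) :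
    z = (u i₀ ⬝ᵥ z) • u i₀ := by
  have horth : ∀ i ≠ i₀, u i ⬝ᵥ z = 0 := fun i hi => by
    have h : lam i * (u i ⬝ᵥ z) = 0 := by
      rw [← smul_eq_mul, ← smul_dotProduct, ← heig, ← Matrix.vecMul_transpose, hL, ← Matrix.dotProduct_mulVec,
        hz, dotProduct_zero]
    exact (mul_eq_zero.mp h).resolve_left (hlam i hi)
  conv_lhs => rw [← hu.sum_dotProduct_smul z]
  exact Finset.sum_eq_single i₀ (fun i _ hi => by rw [horth i hi, zero_smul]) (by simp)

end IsOrthonormalSys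

theorem sqrt_mul_dotProduct_sqrt_mul {ι : Type*} [Fintype ι] {d : ι → ℝ} (hd : ∀ j, 0 ≤ d j)
    (f g : ι → ℝ) :
    (fun j => √(d j) * f j) ⬝ᵥ (fun j => √(d j) * g j) = ∑ j, d j * (f j * g j) :=
  Finset.sum_congr rfl fun j _ => by linear_combination (f j * g j) * Real.mul_self_sqrt (hd j)

section NormalizedLaplacian

variable {n : ℕ} {W : Matrix (Fin n) (Fin n) ℝ}

theorem normLap_isSymm (hsym : W.IsSymm) : (normLap W).IsSymm := by
  refine Matrix.isSymm_one.sub (Matrix.IsSymm.ext fun i j => ?_)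
  simp only [normAdj, Matrix.of_apply, hsym.apply, mul_comm]

theorem normLap_mulVec_sqrt_gdeg_mul (hd : ∀ i, 0 < gdeg W i) (f : Fin n → ℝ) :
    normLap W *ᵥ (fun j => √(gdeg W j) * f j) =
      fun i => √(gdeg W i) * f i - (∑ j, W i j * f j) / √(gdeg W i) := by
  ext i
  have hs : ∀ j, √(gdeg W j) ≠ 0 := fun j => (Real.sqrt_pos.mpr (hd j)).ne'
  rw [normLap, Matrix.sub_mulVec, Matrix.one_mulVec, Pi.sub_apply]
  simp only [Matrix.mulVec, dotProduct, normAdj, Matrix.of_apply, Finset.sum_div]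
  congr 1
  exact Finset.sum_congr rfl fun j _ => by field_simp [hs i, hs j]

theorem normLap_mulVec_sqrt_gdeg (hd : ∀ i, 0 < gdeg W i) :
    normLap W *ᵥ (fun j => √(gdeg W j)) = 0 := by
  have h := normLap_mulVec_sqrt_gdeg_mul hd 1
  simp only [Pi.one_apply, mul_one] at h
  rw [h]
  ext i
  rw [← gdeg, Pi.zero_apply, sub_eq_zero, eq_div_iff (Real.sqrt_pos.mpr (hd i)).ne',
    Real.mul_self_sqrt (hd i).le]

theorem dotProduct_normLap_mulVec (hsym : W.IsSymm) (hd : ∀ i, 0 < gdeg W i) (f : Fin n → ℝ) :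
    (fun j => √(gdeg W j) * f j) ⬝ᵥ (normLap W *ᵥ fun j => √(gdeg W j) * f j) =
      (∑ i, ∑ j, W i j * (f i - f j) ^ 2) / 2 := by
  set S := ∑ i, ∑ j, W i j * (f i ^ 2 - f i * f j)
  have hquad : (fun j => √(gdeg W j) * f j) ⬝ᵥ (normLap W *ᵥ fun j => √(gdeg W j) * f j) = S := by
    rw [normLap_mulVec_sqrt_gdeg_mul hd]
    refine Finset.sum_congr rfl fun i _ => ?_
    have hs := (Real.sqrt_pos.mpr (hd i)).ne'
    rw [show √(gdeg W i) * f i * (√(gdeg W i) * f i - (∑ j, W i j * f j) / √(gdeg W i))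
        = gdeg W i * f i ^ 2 - f i * ∑ j, W i j * f j by
          field_simp; rw [Real.sq_sqrt (hd i).le]; ring,
      gdeg, Finset.sum_mul, Finset.mul_sum, ← Finset.sum_sub_distrib]
    exact Finset.sum_congr rfl fun j _ => by ring
  have hswap : ∑ i, ∑ j, W i j * (f j ^ 2 - f j * f i) = S := by
    rw [Finset.sum_comm]
    simp only [hsym.apply]
    rfl
  have hsplit : ∑ i, ∑ j, W i j * (f i - f j) ^ 2 =
      S + ∑ i, ∑ j, W i j * (f j ^ 2 - f j * f i) := by
    rw [← Finset.sum_add_distrib]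
    exact Finset.sum_congr rfl fun i _ => by
      rw [← Finset.sum_add_distrib]
      exact Finset.sum_congr rfl fun j _ => by ring
  rw [hquad, hsplit, hswap]
  ring

theorem exists_sum_gdeg_mul_eq_mul_dotProduct (hsym : W.IsSymm) (hd : ∀ i, 0 < gdeg W i)
    {u : Fin n → Fin n → ℝ} {lam : Fin n → ℝ} (hu : IsOrthonormalSys u)
    (heig : ∀ i, normLap W *ᵥ u i = lam i • u i) {i₀ : Fin n} (hlam : ∀ i ≠ i₀, lam i ≠ 0) :
    ∃ c ≠ 0, ∀ f : Fin n → ℝ,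
      ∑ j, gdeg W j * f j = c * (u i₀ ⬝ᵥ fun j => √(gdeg W j) * f j) := by
  have hz := hu.eq_smul_of_mulVec_eq_zero (normLap_isSymm hsym) heig
    (normLap_mulVec_sqrt_gdeg hd) hlam
  set c := u i₀ ⬝ᵥ fun j => √(gdeg W j)
  refine ⟨c, fun hc => ?_, fun f => ?_⟩
  · have h := congrFun hz i₀
    rw [hc, zero_smul] at h
    exact (Real.sqrt_pos.mpr (hd i₀)).ne' h
  · calc ∑ j, gdeg W j * f j = (fun j => √(gdeg W j) * 1) ⬝ᵥ fun j => √(gdeg W j) * f j := by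
          rw [sqrt_mul_dotProduct_sqrt_mul fun j => (hd j).le]
          simp only [one_mul]
      _ = c * (u i₀ ⬝ᵥ fun j => √(gdeg W j) * f j) := by
          simp only [mul_one]
          rw [hz, smul_dotProduct, smul_eq_mul]

theorem mul_sum_gdeg_mul_sq_le (hsym : W.IsSymm) (hnn : ∀ i j, 0 ≤ W i j) (hd : ∀ i, 0 < gdeg W i)
    {u : Fin n → Fin n → ℝ} {lam : Fin n → ℝ} (hu : IsOrthonormalSys u)
    (heig : ∀ i, normLap W *ᵥ u i = lam i • u i) {f g : Fin n → ℝ} {i : Fin n} {μ : ℝ}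
    (hg : (fun j => √(gdeg W j) * g j) = u i) (hfg : ∀ a b, |f a - f b| ≤ |g a - g b|)
    (hμ : ∀ k, u k ⬝ᵥ (fun j => √(gdeg W j) * f j) ≠ 0 → μ ≤ lam k) :
    μ * ∑ j, gdeg W j * f j ^ 2 ≤ lam i := by
  set v := fun j => √(gdeg W j) * f j
  calc μ * ∑ j, gdeg W j * f j ^ 2 = μ * (v ⬝ᵥ v) := by
        rw [sqrt_mul_dotProduct_sqrt_mul fun j => (hd j).le]
        simp only [sq]
    _ ≤ v ⬝ᵥ (normLap W *ᵥ v) := hu.mul_dotProduct_self_le heig hμ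
    _ = (∑ a, ∑ b, W a b * (f a - f b) ^ 2) / 2 := dotProduct_normLap_mulVec hsym hd f
    _ ≤ (∑ a, ∑ b, W a b * (g a - g b) ^ 2) / 2 := by
        gcongr ?_ / 2
        exact Finset.sum_le_sum fun a _ => Finset.sum_le_sum fun b _ =>
          mul_le_mul_of_nonneg_left (sq_le_sq.mpr (hfg a b)) (hnn a b)
    _ = u i ⬝ᵥ (normLap W *ᵥ u i) := by rw [← hg, dotProduct_normLap_mulVec hsym hd g]
    _ = lam i := by
        rw [heig, dotProduct_smul, smul_eq_mul, hu.dotProduct_eq, if_pos rfl, mul_one]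

end NormalizedLaplacian

section WeightedVariance

variable {ι : Type*} {d x : ι → ℝ}

theorem sum_mul_sub_mean_sq_le {s : Finset ι} (hd : ∀ j, 0 ≤ d j) (t : ℝ) :
    ∑ j ∈ s, d j * (x j - (∑ j ∈ s, d j)⁻¹ * ∑ j ∈ s, d j * x j) ^ 2 ≤
      ∑ j ∈ s, d j * (x j - t) ^ 2 := by
  set D := ∑ j ∈ s, d j
  set M := ∑ j ∈ s, d j * x j
  rcases (Finset.sum_nonneg fun j _ => hd j : 0 ≤ D).eq_or_lt with hD | hD
  · have hz : ∀ j ∈ s, d j = 0 := (Finset.sum_eq_zero_iff_of_nonneg fun j _ => hd j).mp hD.symm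
    have h0 : ∑ j ∈ s, d j * (x j - D⁻¹ * M) ^ 2 = 0 :=
      Finset.sum_eq_zero fun j hj => by rw [hz j hj, zero_mul]
    exact h0 ▸ Finset.sum_nonneg fun j _ => mul_nonneg (hd j) (sq_nonneg _)
  · have hexpand : ∀ c, ∑ j ∈ s, d j * (x j - c) ^ 2 = ∑ j ∈ s, d j * x j ^ 2 - 2 * c * M + c ^ 2 * D := by
      intro c
      simp only [M, D, Finset.mul_sum, ← Finset.sum_sub_distrib, ← Finset.sum_add_distrib]
      exact Finset.sum_congr rfl fun j _ => by ring
    obtain ⟨m, hm⟩ : ∃ m, m = D⁻¹ * M := ⟨_, rfl⟩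
    have hM : M = m * D := by rw [hm]; field_simp [show D ≠ 0 from hD.ne']
    rw [← hm, hexpand, hexpand, hM]
    nlinarith [mul_nonneg hD.le (sq_nonneg (m - t))]

theorem sum_mul_mul_abs_sub_of_le [Fintype ι] {c : ℝ} (h : ∀ j, x j ≤ c) :
    ∑ j, d j * x j * |x j - c| = c * ∑ j, d j * x j - ∑ j, d j * x j ^ 2 := by
  rw [Finset.mul_sum, ← Finset.sum_sub_distrib]
  exact Finset.sum_congr rfl fun j _ => by rw [abs_of_nonpos (sub_nonpos.mpr (h j))]; ring

theorem sum_mul_mul_abs_sub_of_ge [Fintype ι] {c : ℝ} (h : ∀ j, c ≤ x j) :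
    ∑ j, d j * x j * |x j - c| = ∑ j, d j * x j ^ 2 - c * ∑ j, d j * x j := by
  rw [Finset.mul_sum, ← Finset.sum_sub_distrib]
  exact Finset.sum_congr rfl fun j _ => by rw [abs_of_nonneg (sub_nonneg.mpr (h j))]; ring

theorem exists_sum_mul_mul_abs_sub_eq_zero [Fintype ι] [Nonempty ι] (hd : ∀ j, 0 ≤ d j)
    (hx : ∑ j, d j * x j = 0) : ∃ γ, ∑ j, d j * x j * |x j - γ| = 0 := by
  obtain ⟨jmin, hmin⟩ := Finite.exists_min x
  obtain ⟨jmax, hmax⟩ := Finite.exists_max x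
  have hS : 0 ≤ ∑ j, d j * x j ^ 2 := Finset.sum_nonneg fun j _ => mul_nonneg (hd j) (sq_nonneg _)
  have hcont : Continuous fun γ => ∑ j, d j * x j * |x j - γ| := by fun_prop
  refine mem_range_of_exists_le_of_exists_ge hcont ⟨x jmax, ?_⟩ ⟨x jmin, ?_⟩
  · simp only [sum_mul_mul_abs_sub_of_le hmax, hx]; linarith
  · simp only [sum_mul_mul_abs_sub_of_ge hmin, hx]; linarith

theorem exists_lt_and_exists_le_of_sum_mul_mul_abs_sub_eq_zero [Fintype ι] {γ : ℝ}
    (hx : ∑ j, d j * x j = 0) (hx2 : ∑ j, d j * x j ^ 2 ≠ 0)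
    (hγ : ∑ j, d j * x j * |x j - γ| = 0) : (∃ j, γ < x j) ∧ ∃ j, x j ≤ γ := by
  constructor <;> by_contra! h
  · rw [sum_mul_mul_abs_sub_of_le h, hx] at hγ; exact hx2 (by linarith)
  · rw [sum_mul_mul_abs_sub_of_ge fun j => (h j).le, hx] at hγ; exact hx2 (by linarith)

end WeightedVariance

section TwoVariance

variable {n : ℕ} {d x : Fin n → ℝ}

theorem sVar_le_sum_mul_sub_sq {k : ℕ} (hd : ∀ j, 0 ≤ d j) (P : Fin n → Fin k) (t : Fin k → ℝ) :
    sVar d x P ≤ ∑ j, d j * (x j - t (P j)) ^ 2 := by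
  calc sVar d x P ≤ ∑ a, ∑ j ∈ partSet P a, d j * (x j - t a) ^ 2 :=
        Finset.sum_le_sum fun a _ => sum_mul_sub_mean_sq_le hd (t a)
    _ = ∑ j, d j * (x j - t (P j)) ^ 2 := by
        rw [← Finset.sum_fiberwise Finset.univ P]
        refine Finset.sum_congr rfl fun a _ => Finset.sum_congr rfl fun j hj => ?_
        rw [(Finset.mem_filter.mp hj).2]

theorem S2var_le_sVar (hd : ∀ j, 0 ≤ d j) {P : Fin n → Fin 2} (hP : Function.Surjective P) :
    S2var d x ≤ sVar d x P := by
  refine csInf_le ⟨0, ?_⟩ ⟨P, hP, rfl⟩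
  rintro _ ⟨Q, -, rfl⟩
  exact Finset.sum_nonneg fun a _ => Finset.sum_nonneg fun j _ => mul_nonneg (hd j) (sq_nonneg _)

theorem S2var_le_sum_mul_sq_abs_sub_sub (hd : ∀ j, 0 ≤ d j) {γ : ℝ} (hlt : ∃ j, γ < x j)
    (hle : ∃ j, x j ≤ γ) (α : ℝ) : S2var d x ≤ ∑ j, d j * (|x j - γ| - α) ^ 2 := by
  set P : Fin n → Fin 2 := fun j => if γ < x j then 0 else 1
  have hP : Function.Surjective P := by
    intro a
    fin_cases a
    · obtain ⟨j, hj⟩ := hlt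
      exact ⟨j, if_pos hj⟩
    · obtain ⟨j, hj⟩ := hle
      exact ⟨j, if_neg hj.not_gt⟩
  calc S2var d x ≤ sVar d x P := S2var_le_sVar hd hP
    _ ≤ ∑ j, d j * (x j - ![γ + α, γ - α] (P j)) ^ 2 := sVar_le_sum_mul_sub_sq hd P _
    _ = ∑ j, d j * (|x j - γ| - α) ^ 2 := by
        refine Finset.sum_congr rfl fun j _ => ?_
        by_cases h : γ < x j
        · simp only [P, if_pos h, abs_of_pos (sub_pos.mpr h), Matrix.cons_val_zero]
          ring
        · simp only [P, if_neg h, abs_of_nonpos (sub_nonpos.mpr (not_lt.mp h)),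
            Matrix.cons_val_one, Matrix.cons_val_zero]
          ring

theorem exists_fold_S2var_le (hd : ∀ j, 0 ≤ d j) (hd1 : ∑ j, d j = 1)
    (hx0 : ∑ j, d j * x j = 0) (hx2 : ∑ j, d j * x j ^ 2 ≠ 0) :
    ∃ φ : Fin n → ℝ, ∑ j, d j * φ j = 0 ∧ ∑ j, d j * (x j * φ j) = 0 ∧
      (∀ a b, |φ a - φ b| ≤ |x a - x b|) ∧ S2var d x ≤ ∑ j, d j * φ j ^ 2 := by
  obtain ⟨j, -⟩ := Finset.nonempty_of_sum_ne_zero hx2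
  have : Nonempty (Fin n) := ⟨j⟩
  obtain ⟨γ, hγ⟩ := exists_sum_mul_mul_abs_sub_eq_zero hd hx0
  obtain ⟨hlt, hle⟩ := exists_lt_and_exists_le_of_sum_mul_mul_abs_sub_eq_zero hx0 hx2 hγ
  set α := ∑ j, d j * |x j - γ|
  refine ⟨fun j => |x j - γ| - α, ?_, ?_, fun a b => ?_, S2var_le_sum_mul_sq_abs_sub_sub hd hlt hle α⟩
  · simp only [mul_sub, Finset.sum_sub_distrib, ← Finset.sum_mul, hd1, one_mul]
    exact sub_self α
  · simp only [mul_sub, Finset.sum_sub_distrib, ← mul_assoc, ← Finset.sum_mul, hγ, hx0]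
    ring
  · simpa using abs_abs_sub_abs_le_abs_sub (x a - γ) (x b - γ)

end TwoVariance

/-- `S_2²(D^{-1/2} u₂) ≤ λ₂/λ₃`. -/
theorem statement8 {n : ℕ} (hn : 3 ≤ n) (W : Matrix (Fin n) (Fin n) ℝ)
    (hsym : W.IsSymm) (hnn : ∀ i j, 0 ≤ W i j)
    (hd : ∀ i, 0 < gdeg W i) (hvol : gvol W Finset.univ = 1)
    (lam : Fin n → ℝ) (u : Fin n → Fin n → ℝ)
    (hmono : Monotone lam)
    (hortho : IsOrthonormalSys u)
    (heig : ∀ i, normLap W *ᵥ u i = lam i • u i)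
    (hpos : 0 < lam ⟨1, by omega⟩) :
    S2var (gdeg W) (fun j => u ⟨1, by omega⟩ j / Real.sqrt (gdeg W j))
      ≤ lam ⟨1, by omega⟩ / lam ⟨2, by omega⟩ := by
  set i₀ : Fin n := ⟨0, by omega⟩
  set i₁ : Fin n := ⟨1, by omega⟩
  set i₂ : Fin n := ⟨2, by omega⟩
  set d := gdeg W
  set x : Fin n → ℝ := fun j => u i₁ j / √(d j)
  have hd' : ∀ j, 0 ≤ d j := fun j => (hd j).le
  have hlam : ∀ i, i₁ ≤ i → 0 < lam i := fun i hi => hpos.trans_le (hmono hi)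
  have hux : (fun j => √(d j) * x j) = u i₁ :=
    funext fun j => mul_div_cancel₀ _ (Real.sqrt_pos.mpr (hd j)).ne'
  obtain ⟨c, hc, hmean⟩ := exists_sum_gdeg_mul_eq_mul_dotProduct hsym hd hortho heig (i₀ := i₀)
    fun i hi => (hlam i (Fin.le_def.mpr (by simp [i₀, i₁, Fin.ext_iff] at hi ⊢; omega))).ne'
  have hx0 : ∑ j, d j * x j = 0 := by
    rw [hmean, hux, hortho.dotProduct_eq, if_neg (by simp [i₀, i₁, Fin.ext_iff]), mul_zero]
  have hx2 : ∑ j, d j * x j ^ 2 = 1 := by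
    have h := hortho.dotProduct_eq i₁ i₁
    rw [if_pos rfl, ← hux, sqrt_mul_dotProduct_sqrt_mul hd'] at h
    simpa only [sq] using h
  obtain ⟨φ, hφ0, hxφ, hφx, hS2⟩ := exists_fold_S2var_le hd' hvol hx0 (hx2 ▸ one_ne_zero)
  have hkey : lam i₂ * ∑ j, d j * φ j ^ 2 ≤ lam i₁ := by
    refine mul_sum_gdeg_mul_sq_le hsym hnn hd hortho heig hux hφx fun k hk => ?_
    have hk₀ : k ≠ i₀ := by
      rintro rfl
      exact hk ((mul_eq_zero.mp ((hmean φ).symm.trans hφ0)).resolve_left hc)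
    have hk₁ : k ≠ i₁ := by
      rintro rfl
      exact hk (by rw [← hux, sqrt_mul_dotProduct_sqrt_mul hd', hxφ])
    exact hmono (Fin.le_def.mpr (by simp [i₀, i₁, i₂, Fin.ext_iff] at hk₀ hk₁ ⊢; omega))
  calc S2var d x ≤ ∑ j, d j * φ j ^ 2 := hS2
    _ ≤ lam i₁ / lam i₂ := by
        rw [le_div_iff₀ (hlam i₂ (Fin.le_def.mpr (by simp [i₁, i₂])))]
        linarith

end
end

section
/- Let G=(V,W) be an edge-weighted graph with positive generalized degrees and Vol(V)=1, and let β_1 ≥ β_2 ≥ ... ≥ β_n be the eigenvalues of the normalized modularity matrix B_D. Then for every integer 2 ≤ k ≤ n, the minimum normalized k-way Newman–Girvan modularity satisfies min over k-partitions P_k of Q_k(P_k,G) ≥ Σ_{i=1}^k β_{n+1−i}. -/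
open Finset Matrix

noncomputable section

/-!
The normalized cluster indicators `z_a = D^{1/2} 1_{V_a} / √Vol(V_a)` are orthonormal and
`Q_k(P) = ∑_a z_aᵀ B_D z_a`. Expanding in an orthonormal eigenbasis `u_i` of `B_D` gives
`Q_k(P) = ∑_i β_i t_i` with `t_i = ∑_a ⟨z_a, u_i⟩²`. By Bessel `0 ≤ t_i ≤ 1` and by Parseval
`∑_i t_i = k`; under these constraints `∑_i β_i t_i` is smallest when the weight sits on the
`k` smallest eigenvalues.
-/

lemma dotR_eq_dotProduct {n : ℕ} (x y : Fin n → ℝ) : dotR x y = x ⬝ᵥ y := rfl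

lemma dotR_eq_inner {n : ℕ} (x y : Fin n → ℝ) :
    dotR x y = inner ℝ (WithLp.toLp 2 x : EuclideanSpace ℝ (Fin n)) (WithLp.toLp 2 y) := by
  simp [dotR_eq_dotProduct, EuclideanSpace.inner_eq_star_dotProduct, dotProduct_comm]

namespace IsOrthonormalSys

lemma dotR_self {m n : ℕ} {u : Fin m → Fin n → ℝ} (hu : IsOrthonormalSys u) (a : Fin m) :
    dotR (u a) (u a) = 1 := by
  simpa using hu a a

lemma orthonormal {m n : ℕ} {u : Fin m → Fin n → ℝ} (hu : IsOrthonormalSys u) :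
    Orthonormal ℝ fun a => (WithLp.toLp 2 (u a) : EuclideanSpace ℝ (Fin n)) :=
  orthonormal_iff_ite.mpr fun a b => by rw [← dotR_eq_inner]; exact hu a b

lemma sum_dotR_sq_le {m n : ℕ} {u : Fin m → Fin n → ℝ} (hu : IsOrthonormalSys u)
    (x : Fin n → ℝ) : ∑ a, dotR (u a) x ^ 2 ≤ dotR x x := by
  have := hu.orthonormal.sum_inner_products_le (WithLp.toLp 2 x) (s := univ)
  simpa only [dotR_eq_inner, Real.norm_eq_abs, sq_abs, real_inner_self_eq_norm_sq] using this

variable {n : ℕ} {u : Fin n → Fin n → ℝ}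

lemma transpose_mul_self (hu : IsOrthonormalSys u) : (of u)ᵀ * of u = 1 := by
  rw [mul_eq_one_comm]
  ext a b
  exact hu a b

lemma sum_dotR_smul (hu : IsOrthonormalSys u) (x : Fin n → ℝ) :
    ∑ i, dotR x (u i) • u i = x := by
  have h := congrArg (· *ᵥ x) hu.transpose_mul_self
  simp only [← mulVec_mulVec, one_mulVec, mulVec_transpose, vecMul_eq_sum] at h
  simp only [dotR_eq_dotProduct, dotProduct_comm x]
  exact h

lemma dotR_mulVec_eq_sum (hu : IsOrthonormalSys u) {M : Matrix (Fin n) (Fin n) ℝ}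
    {β : Fin n → ℝ} (heig : ∀ i, M *ᵥ u i = β i • u i) (x : Fin n → ℝ) :
    dotR x (M *ᵥ x) = ∑ i, β i * dotR x (u i) ^ 2 := by
  conv_lhs => enter [2, 2]; rw [← hu.sum_dotR_smul x]
  simp only [mulVec_sum, mulVec_smul, heig, dotR_eq_dotProduct, dotProduct_sum, dotProduct_smul,
    smul_eq_mul]
  exact sum_congr rfl fun i _ => by ring

lemma sum_dotR_sq (hu : IsOrthonormalSys u) (x : Fin n → ℝ) :
    ∑ i, dotR x (u i) ^ 2 = dotR x x := by
  simpa using (hu.dotR_mulVec_eq_sum (M := 1) (β := 1) (by simp) x).symm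

end IsOrthonormalSys

lemma gvol_partSet_pos {n k : ℕ} {W : Matrix (Fin n) (Fin n) ℝ} (hd : ∀ i, 0 < gdeg W i)
    {P : Fin n → Fin k} (hP : Function.Surjective P) (a : Fin k) : 0 < gvol W (partSet P a) := by
  obtain ⟨j, rfl⟩ := hP a
  exact sum_pos (fun i _ => hd i) ⟨j, by simp [partSet]⟩

section ClusterVec

variable {n k : ℕ} (W : Matrix (Fin n) (Fin n) ℝ) (P : Fin n → Fin k)

def clusterVec (a : Fin k) : Fin n → ℝ :=
  fun j => if P j = a then √(gdeg W j) / √(gvol W (partSet P a)) else 0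

lemma sum_clusterVec_mul (a : Fin k) (f : Fin n → ℝ) :
    ∑ j, clusterVec W P a j * f j
      = ∑ j ∈ partSet P a, √(gdeg W j) / √(gvol W (partSet P a)) * f j := by
  simp [clusterVec, partSet, sum_filter, ite_mul]

lemma sum_mul_clusterVec (a : Fin k) (f : Fin n → ℝ) :
    ∑ j, f j * clusterVec W P a j
      = ∑ j ∈ partSet P a, f j * (√(gdeg W j) / √(gvol W (partSet P a))) := by
  simp [clusterVec, partSet, sum_filter, mul_ite]

variable {W P}

lemma isOrthonormalSys_clusterVec (hd : ∀ i, 0 < gdeg W i)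
    (hVol : ∀ a, 0 < gvol W (partSet P a)) : IsOrthonormalSys (clusterVec W P) := by
  intro a b
  rw [dotR, sum_clusterVec_mul]
  split_ifs with hab
  · subst hab
    have hsq : ∀ j ∈ partSet P a, √(gdeg W j) / √(gvol W (partSet P a)) * clusterVec W P a j
        = gdeg W j / gvol W (partSet P a) := fun j hj => by
      rw [clusterVec, if_pos (mem_filter.mp hj).2, div_mul_div_comm,
        Real.mul_self_sqrt (hd j).le, Real.mul_self_sqrt (hVol a).le]
    rw [sum_congr rfl hsq, ← sum_div]
    exact div_self (hVol a).ne'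
  · refine sum_eq_zero fun j hj => ?_
    have hPj : P j ≠ b := (mem_filter.mp hj).2 ▸ hab
    simp [clusterVec, hPj]

lemma dotR_clusterVec_modMat (hd : ∀ i, 0 < gdeg W i) (hVol : ∀ a, 0 < gvol W (partSet P a))
    (a : Fin k) :
    dotR (clusterVec W P a) (modMat W *ᵥ clusterVec W P a)
      = (gvol W (partSet P a))⁻¹ *
        ∑ i ∈ partSet P a, ∑ j ∈ partSet P a, (W i j - gdeg W i * gdeg W j) := by
  rw [dotR, sum_clusterVec_mul, mul_sum]
  refine sum_congr rfl fun i _ => ?_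
  rw [mulVec, dotProduct, sum_mul_clusterVec]
  simp only [mul_sum]
  refine sum_congr rfl fun j _ => ?_
  simp only [modMat, normAdj, Matrix.sub_apply, of_apply]
  have hsi : 0 < √(gdeg W i) := Real.sqrt_pos.mpr (hd i)
  have hsj : 0 < √(gdeg W j) := Real.sqrt_pos.mpr (hd j)
  have hsV : 0 < √(gvol W (partSet P a)) := Real.sqrt_pos.mpr (hVol a)
  field_simp
  simp only [Real.sq_sqrt (hd i).le, Real.sq_sqrt (hd j).le, Real.sq_sqrt (hVol a).le]
  field_simp [(hVol a).ne']

lemma QMod_eq_sum_dotR_clusterVec (hd : ∀ i, 0 < gdeg W i)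
    (hVol : ∀ a, 0 < gvol W (partSet P a)) :
    QMod W P = ∑ a, dotR (clusterVec W P a) (modMat W *ᵥ clusterVec W P a) :=
  sum_congr rfl fun a _ => (dotR_clusterVec_modMat hd hVol a).symm

end ClusterVec

lemma sum_filter_le_sum_mul_of_antitone {n k : ℕ} (hkn : k ≤ n) {β t : Fin n → ℝ}
    (hβ : Antitone β) (ht0 : ∀ i, 0 ≤ t i) (ht1 : ∀ i, t i ≤ 1) (hsum : ∑ i, t i = k) :
    ∑ i ∈ univ.filter (fun i : Fin n => n - k ≤ (i : ℕ)), β i ≤ ∑ i, β i * t i := by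
  rcases Nat.eq_zero_or_pos k with rfl | hk
  · have ht : ∀ i, t i = 0 := fun i =>
      (sum_eq_zero_iff_of_nonneg fun i _ => ht0 i).mp (by simpa using hsum) i (mem_univ i)
    have hS : univ.filter (fun i : Fin n => n - 0 ≤ (i : ℕ)) = ∅ :=
      filter_false_of_mem fun i _ => not_le.mpr i.isLt
    rw [hS, sum_empty]
    simp [ht]
  set S := univ.filter fun i : Fin n => n - k ≤ (i : ℕ)
  -- `β ≤ c` on `S` and `c ≤ β` off `S`, so `∑_S β - ∑ β t ≤ c (#S - ∑ t) = 0`.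
  set c := β ⟨n - k, by omega⟩
  have hS : S = Ici ⟨n - k, by omega⟩ := by
    ext i
    simp [S, Fin.le_def]
  have hcard : (#S : ℝ) = k := by
    rw [hS, Fin.card_Ici, Fin.val_mk]
    norm_cast
    omega
  have hterm : ∀ i, (if i ∈ S then β i else 0) - β i * t i
      ≤ c * ((if i ∈ S then 1 else 0) - t i) := fun i => by
    by_cases hi : i ∈ S
    · have : β i ≤ c := hβ (by rw [hS] at hi; exact mem_Ici.mp hi)
      simp only [hi, if_true]
      nlinarith [ht1 i]
    · have : c ≤ β i := hβ (by rw [hS, mem_Ici, not_le] at hi; exact hi.le)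
      simp only [hi, if_false]
      nlinarith [ht0 i]
  have := sum_le_sum fun i (_ : i ∈ univ) => hterm i
  rw [sum_sub_distrib, ← mul_sum, sum_sub_distrib, ← sum_filter, sum_boole, filter_mem_eq_inter,
    univ_inter, hcard, hsum, sub_self, mul_zero] at this
  exact sub_nonpos.mp this

theorem statement11_general {n : ℕ} (W : Matrix (Fin n) (Fin n) ℝ)
    (hd : ∀ i, 0 < gdeg W i)
    (beta : Fin n → ℝ) (u : Fin n → Fin n → ℝ)
    (hanti : Antitone beta)
    (hortho : IsOrthonormalSys u)
    (heig : ∀ i, modMat W *ᵥ u i = beta i • u i) :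
    ∀ k : ℕ, 2 ≤ k → k ≤ n →
      ∀ P : Fin n → Fin k, Function.Surjective P →
        ∑ i ∈ univ.filter (fun i : Fin n => n - k ≤ (i : ℕ)), beta i ≤ QMod W P := by
  intro k _ hkn P hP
  have hVol := gvol_partSet_pos hd hP
  have hz := isOrthonormalSys_clusterVec hd hVol
  set t : Fin n → ℝ := fun i => ∑ a, dotR (clusterVec W P a) (u i) ^ 2
  have hQ : QMod W P = ∑ i, beta i * t i := by
    simp only [QMod_eq_sum_dotR_clusterVec hd hVol, hortho.dotR_mulVec_eq_sum heig, t, mul_sum]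
    exact sum_comm
  have hsum : ∑ i, t i = k := by
    simp only [t]
    rw [sum_comm]
    simp [hortho.sum_dotR_sq, hz.dotR_self]
  rw [hQ]
  refine sum_filter_le_sum_mul_of_antitone hkn hanti (fun i => sum_nonneg fun a _ => sq_nonneg _)
    (fun i => ?_) hsum
  simpa [hortho.dotR_self] using hz.sum_dotR_sq_le (u i)

/-- `min_{P_k} Q_k(P_k, G) ≥ ∑_{i=1}^k β_{n+1-i}`. -/
theorem statement11 {n : ℕ} (W : Matrix (Fin n) (Fin n) ℝ)
    (hsym : W.IsSymm) (hnn : ∀ i j, 0 ≤ W i j) (hdiag : ∀ i, W i i = 0)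
    (hd : ∀ i, 0 < gdeg W i) (hvol : gvol W Finset.univ = 1)
    (beta : Fin n → ℝ) (u : Fin n → Fin n → ℝ)
    (hanti : Antitone beta)
    (hortho : IsOrthonormalSys u)
    (heig : ∀ i, modMat W *ᵥ u i = beta i • u i) :
    ∀ k : ℕ, 2 ≤ k → k ≤ n →
      ∀ P : Fin n → Fin k, Function.Surjective P →
        ∑ i ∈ univ.filter (fun i : Fin n => n - k ≤ (i : ℕ)), beta i ≤ QMod W P :=
  statement11_general W hd beta u hanti hortho heig

end
end

section
/- Let G=(V,W) be an edge-weighted graph with positive generalized degrees, let u_1,...,u_k ∈ R^n be pairwise orthogonal unit-norm vectors, and let X be the n×k matrix with columns D^{-1/2}u_1,...,D^{-1/2}u_k. For a k-partition P_k = (V_1,...,V_k) of V into nonempty parts, define the normalized partition vectors z_1,...,z_k by z_{a,j} = 1/√(Vol(V_a)) scaled so that D^{1/2}z_1,...,D^{1/2}z_k form an orthonormal system (i.e., z_{a,j} = 1/√(Vol(V_a)) if j ∈ V_a and 0 otherwise), and let F = Span{D^{1/2}z_1,...,D^{1/2}z_k}. Then the weighted k-variance of the rows of X with respect to the partition P_k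 satisfies S_k²(P_k, X) = Σ_{i=1}^k dist²(u_i, F), where dist(u,F) is the Euclidean distance of u from the subspace F. -/
open Finset Matrix

noncomputable section

lemma distSqToSub_eq_of_sub_orthogonal {n : ℕ} {u p : Fin n → ℝ} {F : Submodule ℝ (Fin n → ℝ)}
    (hp : p ∈ F) (horth : ∀ w ∈ F, (u - p) ⬝ᵥ w = 0) :
    distSqToSub u F = dotR (u - p) (u - p) := by
  have hmem : dotR (u - p) (u - p) ∈ {r | ∃ v ∈ F, r = dotR (u - v) (u - v)} := ⟨p, hp, rfl⟩
  have hlb : ∀ r ∈ {r | ∃ v ∈ F, r = dotR (u - v) (u - v)}, dotR (u - p) (u - p) ≤ r := by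
    rintro r ⟨v, hv, rfl⟩
    have hpv : (u - p) ⬝ᵥ (p - v) = 0 := horth _ (F.sub_mem hp hv)
    have hsq : 0 ≤ (p - v) ⬝ᵥ (p - v) := Finset.sum_nonneg fun i _ => mul_self_nonneg _
    have hsplit : u - v = (u - p) + (p - v) := by abel
    simp only [dotR_eq_dotProduct, hsplit, add_dotProduct, dotProduct_add,
      dotProduct_comm (p - v) (u - p), hpv]
    linarith
  exact le_antisymm (csInf_le ⟨_, hlb⟩ hmem) (le_csInf ⟨_, hmem⟩ hlb)

lemma distSqToSub_span_of_isOrthonormalSys {m n : ℕ} {v : Fin m → Fin n → ℝ}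
    (hv : IsOrthonormalSys v) (u : Fin n → ℝ) :
    distSqToSub u (Submodule.span ℝ (Set.range v)) =
      dotR (u - ∑ a, (u ⬝ᵥ v a) • v a) (u - ∑ a, (u ⬝ᵥ v a) • v a) := by
  refine distSqToSub_eq_of_sub_orthogonal
    (Submodule.sum_mem _ fun a _ => Submodule.smul_mem _ _ (Submodule.subset_span ⟨a, rfl⟩))
    fun w hw => ?_
  suffices Submodule.span ℝ (Set.range v) ≤
      LinearMap.ker (dotProductBilin ℝ ℝ (u - ∑ a, (u ⬝ᵥ v a) • v a)) from this hw
  rw [Submodule.span_le]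
  rintro _ ⟨b, rfl⟩
  have hvb : ∀ a, v a ⬝ᵥ v b = if a = b then 1 else 0 := fun a => hv a b
  simp [hvb]

lemma mem_partSet {n k : ℕ} {P : Fin n → Fin k} {a : Fin k} {j : Fin n} :
    j ∈ partSet P a ↔ P j = a := by
  simp [partSet]

/-- The vector `D^{1/2} z_a` attached to the part `a` of `P`, for vertex weights `d`. -/
def normPartVec {n k : ℕ} (d : Fin n → ℝ) (P : Fin n → Fin k) (a : Fin k) : Fin n → ℝ :=
  fun j => Real.sqrt (d j) * (if P j = a then 1 / Real.sqrt (∑ i ∈ partSet P a, d i) else 0)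

section normPartVec

variable {n k : ℕ} {d : Fin n → ℝ} {P : Fin n → Fin k}

lemma normPartVec_apply_self (d : Fin n → ℝ) (P : Fin n → Fin k) (j : Fin n) :
    normPartVec d P (P j) j = Real.sqrt (d j) / Real.sqrt (∑ i ∈ partSet P (P j), d i) := by
  simp [normPartVec, div_eq_mul_inv]

lemma normPartVec_apply_of_ne {a : Fin k} {j : Fin n} (h : P j ≠ a) : normPartVec d P a j = 0 := by
  simp [normPartVec, h]

lemma dotProduct_normPartVec (u : Fin n → ℝ) (a : Fin k) :
    u ⬝ᵥ normPartVec d P a =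
      (∑ j ∈ partSet P a, Real.sqrt (d j) * u j) / Real.sqrt (∑ i ∈ partSet P a, d i) := by
  simp only [dotProduct, normPartVec, mul_ite, mul_zero, partSet, ← Finset.sum_filter,
    Finset.sum_div]
  exact Finset.sum_congr rfl fun j _ => by ring

lemma isOrthonormalSys_normPartVec (hd : ∀ j, 0 < d j) (hP : Function.Surjective P) :
    IsOrthonormalSys (normPartVec d P) := by
  intro a b
  rw [dotR_eq_dotProduct, dotProduct_comm, dotProduct_normPartVec]
  split_ifs with hab
  · subst hab
    have hvol : 0 < ∑ i ∈ partSet P a, d i := by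
      obtain ⟨j, rfl⟩ := hP a
      exact Finset.sum_pos (fun i _ => hd i) ⟨j, mem_partSet.2 rfl⟩
    have hsq : ∀ j ∈ partSet P a, Real.sqrt (d j) * normPartVec d P a j =
        d j / Real.sqrt (∑ i ∈ partSet P a, d i) := by
      intro j hj
      rw [← mem_partSet.1 hj, normPartVec_apply_self, mul_div_assoc',
        Real.mul_self_sqrt (hd j).le]
    rw [Finset.sum_congr rfl hsq, ← Finset.sum_div, div_div, Real.mul_self_sqrt hvol.le,
      div_self hvol.ne']
  · rw [Finset.sum_eq_zero fun j hj => by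
      rw [normPartVec_apply_of_ne (by rwa [mem_partSet.1 hj]), mul_zero], zero_div]

lemma sum_dotProduct_normPartVec_smul_apply {m : ℕ} (hd : ∀ j, 0 ≤ d j)
    (u : Fin m → Fin n → ℝ) (t : Fin m) (j : Fin n) :
    (∑ a, (u t ⬝ᵥ normPartVec d P a) • normPartVec d P a) j =
      Real.sqrt (d j) * vCenter d (fun j t => u t j / Real.sqrt (d j)) P (P j) t := by
  have hvol : 0 ≤ ∑ i ∈ partSet P (P j), d i := Finset.sum_nonneg fun i _ => hd i
  have hweight : ∀ i, d i * (u t i / Real.sqrt (d i)) = Real.sqrt (d i) * u t i := fun i => by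
    rw [mul_div_left_comm, Real.div_sqrt, mul_comm]
  rw [Finset.sum_apply, Finset.sum_eq_single (P j)
    (fun a _ ha => by rw [Pi.smul_apply, normPartVec_apply_of_ne (Ne.symm ha), smul_zero])
    (by simp)]
  simp only [Pi.smul_apply, smul_eq_mul, dotProduct_normPartVec, normPartVec_apply_self, vCenter,
    hweight]
  rw [div_mul_div_comm, Real.mul_self_sqrt hvol]
  ring

end normPartVec

lemma kVar_eq_sum {n k m : ℕ} (d : Fin n → ℝ) (x : Fin n → Fin m → ℝ) (P : Fin n → Fin k) :
    kVar d x P = ∑ j, d j * ∑ t, (x j t - vCenter d x P (P j) t) ^ 2 := by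
  rw [kVar, ← Finset.sum_fiberwise Finset.univ P]
  refine Finset.sum_congr rfl fun a _ => Finset.sum_congr rfl fun j hj => ?_
  rw [mem_partSet.1 hj]

theorem statement13_general {n k : ℕ} (W : Matrix (Fin n) (Fin n) ℝ)
    (hd : ∀ i, 0 < gdeg W i)
    (u : Fin k → Fin n → ℝ)
    (P : Fin n → Fin k) (hP : Function.Surjective P) :
    kVar (gdeg W) (fun j t => u t j / Real.sqrt (gdeg W j)) P =
      ∑ i : Fin k,
        distSqToSub (u i)
          (Submodule.span ℝ
            (Set.range fun a : Fin k => fun j : Fin n =>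
              Real.sqrt (gdeg W j) *
                (if P j = a then 1 / Real.sqrt (gvol W (partSet P a)) else 0))) := by
  have hdist := distSqToSub_span_of_isOrthonormalSys (isOrthonormalSys_normPartVec hd hP)
  have hproj := sum_dotProduct_normPartVec_smul_apply (P := P) (fun j => (hd j).le) u
  have hterm : ∀ j (x c : ℝ),
      gdeg W j * (x / Real.sqrt (gdeg W j) - c) ^ 2 = (x - Real.sqrt (gdeg W j) * c) ^ 2 := by
    intro j x c
    have := Real.sqrt_pos.2 (hd j)
    nth_rw 1 [← Real.sq_sqrt (hd j).le]
    field_simp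
  change _ = ∑ i, distSqToSub (u i) (Submodule.span ℝ (Set.range (normPartVec (gdeg W) P)))
  simp only [hdist, dotR, Pi.sub_apply, hproj, kVar_eq_sum, Finset.mul_sum, hterm, ← sq]
  exact Finset.sum_comm

/-- `S_k²(P_k, X) = ∑_{i=1}^k dist²(u_i, F)` where `F` is spanned by the
vectors `D^{1/2} z_a` built from the normalized partition vectors. -/
theorem statement13 {n k : ℕ} (W : Matrix (Fin n) (Fin n) ℝ)
    (hsym : W.IsSymm) (hnn : ∀ i j, 0 ≤ W i j) (hdiag : ∀ i, W i i = 0)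
    (hd : ∀ i, 0 < gdeg W i)
    (u : Fin k → Fin n → ℝ) (hortho : IsOrthonormalSys u)
    (P : Fin n → Fin k) (hP : Function.Surjective P) :
    kVar (gdeg W) (fun j t => u t j / Real.sqrt (gdeg W j)) P =
      ∑ i : Fin k,
        distSqToSub (u i)
          (Submodule.span ℝ
            (Set.range fun a : Fin k => fun j : Fin n =>
              Real.sqrt (gdeg W j) *
                (if P j = a then 1 / Real.sqrt (gvol W (partSet P a)) else 0))) :=
  statement13_general W hd u P hP

end
end

section
/- Let u_1,...,u_k ∈ R^n be an orthonormal system and let F ⊆ R^n be a k-dimensional subspace such that Σ_{i=1}^k dist²(u_i, F) = s², where dist(u,F) is the Euclidean distance of u from F. Then there exists an orthonormal system v_1,...,v_k ∈ F such that Σ_{i=1}^k ‖u_i − v_i‖² ≤ 2s². -/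
open Finset Matrix

noncomputable section

/-!
Let `T : ℝᵏ → F` send `eᵢ` to the projection `yᵢ` of `uᵢ` onto `F`; it is a contraction. In an
orthonormal eigenbasis `q` of `T*T` the vectors `T q_a` are pairwise orthogonal, of norms
`σ_a ≤ 1`. Sending `q` to an orthonormal basis of `F` that contains the normalised `T q_a` gives an
isometry `S : ℝᵏ ≃ F` with `∑ ⟪T eᵢ, S eᵢ⟫ = ∑ σ_a ≥ ∑ σ_a² = ∑ ‖yᵢ‖²` (both sums are traces, hence
basis independent). For `vᵢ = S eᵢ` this gives
`∑ ‖uᵢ - vᵢ‖² = 2 ∑ (1 - ⟪yᵢ, vᵢ⟫) ≤ 2 ∑ (1 - ‖yᵢ‖²) = 2 ∑ dist²(uᵢ, F)`.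
-/

open scoped InnerProductSpace
open Module

section RCLike

variable {𝕜 V W : Type*} [RCLike 𝕜]
  [NormedAddCommGroup V] [InnerProductSpace 𝕜 V] [FiniteDimensional 𝕜 V]
  [NormedAddCommGroup W] [InnerProductSpace 𝕜 W] [FiniteDimensional 𝕜 W]

theorem LinearMap.trace_adjoint_comp_eq_sum_inner {ι : Type*} [Fintype ι] (A B : V →ₗ[𝕜] W)
    (b : OrthonormalBasis ι 𝕜 V) :
    (A.adjoint ∘ₗ B).trace 𝕜 V = ∑ i, ⟪A (b i), B (b i)⟫_𝕜 := by
  simp only [LinearMap.trace_eq_sum_inner _ b, LinearMap.comp_apply,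
    LinearMap.adjoint_inner_right]

theorem LinearMap.exists_orthonormalBasis_pairwise_inner_apply_eq_zero (T : V →ₗ[𝕜] W) :
    ∃ q : OrthonormalBasis (Fin (finrank 𝕜 V)) 𝕜 V,
      Pairwise fun a c => ⟪T (q a), T (q c)⟫_𝕜 = 0 := by
  have hA := T.isSymmetric_adjoint_comp_self
  refine ⟨hA.eigenvectorBasis rfl, fun a c hac => ?_⟩
  change ⟪T _, T _⟫_𝕜 = 0
  rw [← LinearMap.adjoint_inner_right, ← LinearMap.comp_apply, hA.apply_eigenvectorBasis,
    inner_smul_right, orthonormal_iff_ite.mp (hA.eigenvectorBasis rfl).orthonormal a c,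
    if_neg hac, mul_zero]

end RCLike

section Real

variable {V W : Type*}
  [NormedAddCommGroup V] [InnerProductSpace ℝ V] [FiniteDimensional ℝ V]
  [NormedAddCommGroup W] [InnerProductSpace ℝ W] [FiniteDimensional ℝ W]

theorem exists_orthonormalBasis_inner_eq_norm {ι : Type*} [Fintype ι] {w : ι → W}
    (hw : Pairwise fun a c => ⟪w a, w c⟫_ℝ = 0) (hcard : finrank ℝ W = Fintype.card ι) :
    ∃ b : OrthonormalBasis ι ℝ W, ∀ a, ⟪w a, b a⟫_ℝ = ‖w a‖ := by
  obtain ⟨b, hb⟩ := Orthonormal.exists_orthonormalBasis_extension_of_card_eq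
    (v := fun a => ‖w a‖⁻¹ • w a) (s := {a | w a ≠ 0}) hcard <| by
      classical
      rw [orthonormal_iff_ite]
      rintro ⟨a, ha⟩ ⟨c, hc⟩
      simp only [Set.domRestrict_apply, Subtype.mk.injEq, real_inner_smul_left,
        real_inner_smul_right]
      by_cases hac : a = c
      · subst hac
        rw [if_pos rfl, real_inner_self_eq_norm_sq]
        field_simp [norm_ne_zero_iff.mpr ha]
      · rw [if_neg hac, hw hac, mul_zero, mul_zero]
  refine ⟨b, fun a => ?_⟩
  by_cases ha : w a = 0
  · simp [ha]
  · rw [hb a ha, real_inner_smul_right, real_inner_self_eq_norm_sq]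
    field_simp [norm_ne_zero_iff.mpr ha]

theorem LinearMap.exists_linearIsometryEquiv_sum_norm_sq_le_sum_inner {ι : Type*} [Fintype ι]
    (T : V →ₗ[ℝ] W) (hT : ∀ x, ‖T x‖ ≤ ‖x‖) (hdim : finrank ℝ V = finrank ℝ W)
    (e : OrthonormalBasis ι ℝ V) :
    ∃ S : V ≃ₗᵢ[ℝ] W, ∑ i, ‖T (e i)‖ ^ 2 ≤ ∑ i, ⟪T (e i), S (e i)⟫_ℝ := by
  obtain ⟨q, hq⟩ := T.exists_orthonormalBasis_pairwise_inner_apply_eq_zero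
  obtain ⟨b, hb⟩ := exists_orthonormalBasis_inner_eq_norm hq (by simp [hdim])
  let S := q.equiv b (Equiv.refl _)
  have change_basis (B : V →ₗ[ℝ] W) :
      ∑ i, ⟪T (e i), B (e i)⟫_ℝ = ∑ a, ⟪T (q a), B (q a)⟫_ℝ := by
    rw [← T.trace_adjoint_comp_eq_sum_inner B e, T.trace_adjoint_comp_eq_sum_inner B q]
  refine ⟨S, ?_⟩
  calc ∑ i, ‖T (e i)‖ ^ 2 = ∑ a, ‖T (q a)‖ ^ 2 := by
        simp_rw [← real_inner_self_eq_norm_sq]; exact change_basis T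
    _ ≤ ∑ a, ⟪T (q a), S (q a)⟫_ℝ := Finset.sum_le_sum fun a _ => by
        have hTq : ‖T (q a)‖ ≤ 1 := (hT (q a)).trans_eq (q.orthonormal.1 a)
        rw [OrthonormalBasis.equiv_apply_basis, Equiv.refl_apply, hb a]
        nlinarith [norm_nonneg (T (q a))]
    _ = ∑ i, ⟪T (e i), S (e i)⟫_ℝ := (change_basis S.toLinearMap).symm

end Real

theorem Orthonormal.exists_orthonormal_mem_sum_norm_sub_sq_le
    {E ι : Type*} [NormedAddCommGroup E] [InnerProductSpace ℝ E] [Fintype ι]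
    {u : ι → E} (hu : Orthonormal ℝ u) (K : Submodule ℝ E) [FiniteDimensional ℝ K]
    (hK : finrank ℝ K = Fintype.card ι) :
    ∃ v : ι → E, (∀ i, v i ∈ K) ∧ Orthonormal ℝ v ∧
      ∑ i, ‖u i - v i‖ ^ 2 ≤ 2 * ∑ i, ‖u i - K.starProjection (u i)‖ ^ 2 := by
  classical
  let e := EuclideanSpace.basisFun ι ℝ
  have he : Orthonormal ℝ e.toBasis := by rw [e.coe_toBasis]; exact e.orthonormal
  have hLe : ⇑(e.toBasis.constr ℝ u) ∘ ⇑e.toBasis = u := funext (e.toBasis.constr_basis ℝ u)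
  let L : EuclideanSpace ℝ ι →ₗᵢ[ℝ] E :=
    (e.toBasis.constr ℝ u).isometryOfOrthonormal he (by rwa [hLe])
  let T : EuclideanSpace ℝ ι →ₗ[ℝ] K := K.orthogonalProjectionOnto.toLinearMap ∘ₗ L.toLinearMap
  have hTe (i : ι) : T (e i) = K.orthogonalProjectionOnto (u i) := by
    have hLu : L (e i) = u i := by rw [← e.coe_toBasis]; exact congrFun hLe i
    exact congrArg K.orthogonalProjectionOnto hLu
  obtain ⟨S, hS⟩ := T.exists_linearIsometryEquiv_sum_norm_sq_le_sum_inner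
    (fun x => (K.norm_orthogonalProjectionOnto_apply_le (L x)).trans_eq (L.norm_map x))
    (by simp [hK]) e
  have hv : Orthonormal ℝ fun i => (S (e i) : E) :=
    (e.orthonormal.comp_linearIsometryEquiv S).comp_linearIsometry K.subtypeₗᵢ
  refine ⟨fun i => S (e i), fun i => (S (e i)).2, hv, ?_⟩
  have hdist (i : ι) : ‖u i - S (e i)‖ ^ 2 = 2 - 2 * ⟪T (e i), S (e i)⟫_ℝ := by
    rw [norm_sub_sq_real, hu.1 i, hv.1 i, hTe, K.inner_orthogonalProjectionOnto_eq_of_mem_right]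
    ring
  have hproj (i : ι) : ‖u i - K.starProjection (u i)‖ ^ 2 = 1 - ‖T (e i)‖ ^ 2 := by
    have hpyth := K.norm_sq_eq_add_norm_sq_starProjection (u i)
    rw [K.starProjection_orthogonal_val, hu.1 i] at hpyth
    rw [hTe]
    change _ = 1 - ‖K.starProjection (u i)‖ ^ 2
    linarith
  rw [Finset.sum_congr rfl fun i _ => hdist i, Finset.sum_congr rfl fun i _ => hproj i]
  simp only [Finset.sum_sub_distrib, ← Finset.mul_sum, Finset.sum_const, nsmul_eq_mul]
  linarith

theorem dotR_eq_inner_s14 {n : ℕ} (u v : Fin n → ℝ) :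
    dotR u v = ⟪WithLp.toLp 2 u, WithLp.toLp 2 v⟫_ℝ := by
  simp [dotR, PiLp.inner_apply, mul_comm]

theorem dotR_self_eq_norm_sq {n : ℕ} (u : Fin n → ℝ) : dotR u u = ‖WithLp.toLp 2 u‖ ^ 2 := by
  rw [dotR_eq_inner_s14, real_inner_self_eq_norm_sq]

theorem isOrthonormalSys_iff {m n : ℕ} (u : Fin m → Fin n → ℝ) :
    IsOrthonormalSys u ↔ Orthonormal ℝ fun i => WithLp.toLp 2 (u i) := by
  classical
  simp only [IsOrthonormalSys, orthonormal_iff_ite, dotR_eq_inner_s14]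

theorem distSqToSub_eq_norm_sub_starProjection_sq {n : ℕ} (u : Fin n → ℝ)
    (F : Submodule ℝ (Fin n → ℝ)) (K : Submodule ℝ (EuclideanSpace ℝ (Fin n)))
    [K.HasOrthogonalProjection] (hK : ∀ x, x ∈ K ↔ x.ofLp ∈ F) :
    distSqToSub u F = ‖WithLp.toLp 2 u - K.starProjection (WithLp.toLp 2 u)‖ ^ 2 := by
  refine IsLeast.csInf_eq ⟨⟨(K.starProjection (WithLp.toLp 2 u)).ofLp,
    (hK _).mp (K.starProjection_apply_mem _), by rw [dotR_self_eq_norm_sq]; simp⟩, ?_⟩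
  rintro r ⟨v, hv, rfl⟩
  rw [dotR_self_eq_norm_sq, WithLp.toLp_sub]
  gcongr
  rw [K.starProjection_minimal]
  exact ciInf_le ⟨0, by rintro _ ⟨w, rfl⟩; exact norm_nonneg _⟩
    (⟨WithLp.toLp 2 v, (hK _).mpr hv⟩ : K)

theorem statement14_general {n k : ℕ} (u : Fin k → Fin n → ℝ) (hu : IsOrthonormalSys u)
    (F : Submodule ℝ (Fin n → ℝ)) (hF : Module.finrank ℝ F = k)
    (s : ℝ)
    (hdist : ∑ i : Fin k, distSqToSub (u i) F = s ^ 2) :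
    ∃ v : Fin k → Fin n → ℝ, (∀ i, v i ∈ F) ∧ IsOrthonormalSys v ∧
      ∑ i : Fin k, dotR (u i - v i) (u i - v i) ≤ 2 * s ^ 2 := by
  let K : Submodule ℝ (EuclideanSpace ℝ (Fin n)) :=
    F.map (WithLp.linearEquiv 2 ℝ (Fin n → ℝ)).symm.toLinearMap
  have hK (x : EuclideanSpace ℝ (Fin n)) : x ∈ K ↔ x.ofLp ∈ F := by
    simp [K, Submodule.mem_map_equiv]
  have hKdim : finrank ℝ K = Fintype.card (Fin k) := by
    rw [Fintype.card_fin, ← hF]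
    exact LinearEquiv.finrank_map_eq _ F
  obtain ⟨v, hvK, hv, hle⟩ :=
    ((isOrthonormalSys_iff u).mp hu).exists_orthonormal_mem_sum_norm_sub_sq_le K hKdim
  refine ⟨fun i => (v i).ofLp, fun i => (hK _).mp (hvK i), (isOrthonormalSys_iff _).mpr hv, ?_⟩
  simp_rw [← hdist, distSqToSub_eq_norm_sub_starProjection_sq _ F K hK, dotR_self_eq_norm_sq]
  simpa using hle

/-- an orthonormal system at squared distance `s²` from a k-dimensional
subspace `F` can be approximated by an orthonormal system inside `F` within `2s²`. -/
theorem statement14 {n k : ℕ} (u : Fin k → Fin n → ℝ) (hu : IsOrthonormalSys u)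
    (F : Submodule ℝ (Fin n → ℝ)) (hF : Module.finrank ℝ F = k)
    (s : ℝ) (hs : 0 ≤ s)
    (hdist : ∑ i : Fin k, distSqToSub (u i) F = s ^ 2) :
    ∃ v : Fin k → Fin n → ℝ, (∀ i, v i ∈ F) ∧ IsOrthonormalSys v ∧
      ∑ i : Fin k, dotR (u i - v i) (u i - v i) ≤ 2 * s ^ 2 :=
  statement14_general u hu F hF s hdist
end
end
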